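/- arXiv:1205.6006 — 6 statements merged into one kernel-verified Lean document; each statement's English description precedes it below -/
import Mathlib

section
/- Let r ≥ 1, let S be a finite set, and suppose that to each s ∈ S is assigned a nonzero vector α(s) ∈ ℕ^r. Then in the formal power series ring ℤ[[t, z_1, …, z_r]], writing z^v = z_1^{v_1}⋯z_r^{v_r} for v ∈ ℕ^r, one has ∏_{s∈S} (1 − t·z^{α(s)})·(1 − z^{α(s)})^{-1} = Σ_{c : S → ℕ} (1 − t)^{#{s ∈ S : c(s) ≠ 0}} · z^{Σ_{s∈S} c(s)·α(s)}, where the right-hand side is a well-defined formal power series because each α(s) is nonzero (so only finitely many functions c contribute to any fixed monomial). -/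
open MvPowerSeries

/-- The variable `t` in `ℤ[[t, z_1, …, z_r]]`. -/
noncomputable def tvar (r : ℕ) : MvPowerSeries (Option (Fin r)) ℤ :=
  MvPowerSeries.X none

/-- The monomial `z^v = z_1^{v 1} ⋯ z_r^{v r}` in `ℤ[[t, z_1, …, z_r]]`. -/
noncomputable def zmon (r : ℕ) (v : Fin r → ℕ) : MvPowerSeries (Option (Fin r)) ℤ :=
  MvPowerSeries.monomial (Finsupp.equivFunOnFinite.symm fun o => Option.elim o 0 v) 1

/-! Each factor is a geometric series in disguise:
`(1 - t z^a)(1 - z^a)⁻¹ = 1 + (1 - t) ∑_{n ≥ 1} z^{n a}`, which converges in the product topology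
because `a ≠ 0`. Over discrete `ℤ` this topology is linear, hence nonarchimedean, so a finite
product of convergent sums is the sum, over all choices `c : S → ℕ`, of the products of the chosen
terms; the term of `c` is `(1 - t)^{#{s | c s ≠ 0}} z^{∑ c s • α s}`. Continuity of the
coefficient maps gives the identity coefficientwise. -/

open MvPowerSeries.WithPiTopology

universe u

theorem IsLinearTopology.nonarchimedeanRing {R : Type*} [Ring R] [TopologicalSpace R]
    [IsTopologicalRing R] [IsLinearTopology R R] : NonarchimedeanRing R where
  is_nonarchimedean U hU := by
    obtain ⟨I, hI, hIU⟩ := (IsLinearTopology.hasBasis_open_ideal (R := R)).mem_iff.mp hU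
    exact ⟨⟨I.toAddSubgroup, hI⟩, hIU⟩

theorem hasSum_fintype_prod_of_nonarchimedean {R ι : Type*} [CommRing R] [UniformSpace R]
    [IsUniformAddGroup R] [NonarchimedeanRing R] {S : Type u} [Fintype S] {f : S → ι → R}
    {a : S → R} (hf : ∀ s, HasSum (f s) (a s)) :
    HasSum (fun c : S → ι => ∏ s, f s (c s)) (∏ s, a s) := by
  suffices ∀ (T : Type u) [Finite T] [Fintype T] (f : T → ι → R) (a : T → R),
      (∀ s, HasSum (f s) (a s)) → HasSum (fun c : T → ι => ∏ s, f s (c s)) (∏ s, a s) from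
    this S f a hf
  intro T _
  induction T using Finite.induction_empty_option with
  | of_equiv e ih =>
    intro _ f a hf
    have := Fintype.ofEquiv _ e.symm
    have h := ih (fun s => f (e s)) (fun s => a (e s)) (fun s => hf (e s))
    rw [Equiv.prod_comp e a] at h
    rw [← (e.arrowCongr (Equiv.refl ι)).hasSum_iff]
    convert h using 2 with c
    exact (e.prod_comp _).symm.trans (by simp)
  | h_empty =>
    intro _ f a _
    simp
  | @h_option T _ ih =>
    intro _ f a hf
    have := Fintype.ofFinite T
    obtain rfl := Subsingleton.elim ‹Fintype (Option T)› instFintypeOption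
    have h := (hf none).mul_of_nonarchimedean (ih _ _ fun s => hf (some s))
    rw [← Fintype.prod_option a, ← (Equiv.piOptionEquivProd (β := fun _ => ι)).hasSum_iff] at h
    convert h using 2 with c
    simp [Fintype.prod_option]

section Geometric

variable {σ R : Type*} [CommRing R] [TopologicalSpace R] [IsTopologicalRing R] [T2Space R]
  {x : MvPowerSeries σ R}

theorem hasSum_pow_invOfUnit_one_sub (hx : constantCoeff x = 0) :
    HasSum (x ^ ·) (invOfUnit (1 - x) 1) := by
  convert (summable_pow_of_constantCoeff_eq_zero hx).hasSum
  refine (left_inv_eq_right_inv (tsum_pow_mul_one_sub_of_constantCoeff_eq_zero hx)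
    (mul_invOfUnit _ _ ?_)).symm
  simp [hx]

theorem hasSum_one_sub_mul_mul_invOfUnit_one_sub (t : MvPowerSeries σ R)
    (hx : constantCoeff x = 0) :
    HasSum (fun n => (1 - t) ^ (if n ≠ 0 then 1 else 0) * x ^ n)
      ((1 - t * x) * invOfUnit (1 - x) 1) := by
  have hinv : (1 - x) * invOfUnit (1 - x) 1 = 1 := mul_invOfUnit _ _ (by simp [hx])
  refine (hasSum_nat_add_iff' 1).mp ?_
  have hshift : (1 - t * x) * invOfUnit (1 - x) 1
      - ∑ i ∈ Finset.range 1, (1 - t) ^ (if i ≠ 0 then 1 else 0) * x ^ i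
      = (1 - t) * x * invOfUnit (1 - x) 1 := by
    simp only [Finset.sum_range_one, ne_eq, not_true_eq_false, if_false, pow_zero, one_mul]
    linear_combination hinv
  rw [hshift]
  simpa [pow_succ', mul_assoc] using (hasSum_pow_invOfUnit_one_sub hx).mul_left ((1 - t) * x)

end Geometric

variable {r : ℕ}

theorem constantCoeff_zmon {v : Fin r → ℕ} (hv : v ≠ 0) : constantCoeff (zmon r v) = 0 := by
  rw [zmon, ← coeff_zero_eq_constantCoeff_apply, coeff_monomial, if_neg]
  intro h
  exact hv (funext fun i => by simpa using congr($h (some i)).symm)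

theorem prod_zmon_pow {S : Type*} [Fintype S] (α : S → Fin r → ℕ) (c : S → ℕ) :
    ∏ s, zmon r (α s) ^ c s = zmon r (∑ s, c s • α s) := by
  simp only [zmon, monomial_pow, one_pow, prod_monomial, Finset.prod_const_one]
  refine congrArg (monomial · 1) (Finsupp.ext fun o => ?_)
  cases o <;> simp

attribute [local instance] IsLinearTopology.nonarchimedeanRing

theorem stmt0_general (r : ℕ) (S : Type) [Fintype S]
    (α : S → (Fin r → ℕ)) (hα : ∀ s, α s ≠ 0) :
    ∀ e : Option (Fin r) →₀ ℕ,
      MvPowerSeries.coeff e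
        (∏ s : S, (1 - tvar r * zmon r (α s)) *
          MvPowerSeries.invOfUnit (1 - zmon r (α s)) 1)
      = ∑' c : S → ℕ,
          MvPowerSeries.coeff e
            ((1 - tvar r) ^ (Finset.univ.filter fun s => c s ≠ 0).card *
              zmon r (∑ s : S, c s • α s)) := by
  have hprod := hasSum_fintype_prod_of_nonarchimedean fun s =>
    hasSum_one_sub_mul_mul_invOfUnit_one_sub (tvar r) (constantCoeff_zmon (hα s))
  have hterm (c : S → ℕ) : ∏ s, (1 - tvar r) ^ (if c s ≠ 0 then 1 else 0) * zmon r (α s) ^ c s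
      = (1 - tvar r) ^ (Finset.univ.filter fun s => c s ≠ 0).card * zmon r (∑ s, c s • α s) := by
    rw [Finset.prod_mul_distrib, Finset.prod_pow_eq_pow_sum, ← Finset.card_filter, prod_zmon_pow]
  simp_rw [hterm] at hprod
  exact fun e => ((hasSum_iff_hasSum_coeff.mp hprod) e).tsum_eq.symm

/-- the Gindikin–Karpelevich sum over Kostant partitions, stated
coefficientwise in `ℤ[[t, z_1, …, z_r]]`. -/
theorem stmt0 (r : ℕ) (hr : 1 ≤ r) (S : Type) [Fintype S]
    (α : S → (Fin r → ℕ)) (hα : ∀ s, α s ≠ 0) :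
    ∀ e : Option (Fin r) →₀ ℕ,
      MvPowerSeries.coeff e
        (∏ s : S, (1 - tvar r * zmon r (α s)) *
          MvPowerSeries.invOfUnit (1 - zmon r (α s)) 1)
      = ∑' c : S → ℕ,
          MvPowerSeries.coeff e
            ((1 - tvar r) ^ (Finset.univ.filter fun s => c s ≠ 0).card *
              zmon r (∑ s : S, c s • α s)) :=
  stmt0_general r S α hα
end

section
/- The map Ξ sending T ∈ 𝒯(∞) to the function on the positive roots of A_r defined by Ξ(T)(β_{i,k}) = ℓ_{i,k+1}(T) for 1 ≤ i ≤ k ≤ r is a bijection from 𝒯(∞) onto the set of all functions from {β_{i,k} : 1 ≤ i ≤ k ≤ r} to the nonnegative integers. Moreover, for every T ∈ 𝒯(∞), seg(T) equals the number of positive roots α with Ξ(T)(α) ≠ 0, and wt(T) = −Σ_α Ξ(T)(α)·α. -/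
/-- Marginally large semistandard Young tableaux of type `A_r`, on the alphabet
`{1 < 2 < ⋯ < r+1}`: exactly `r` rows (given as lists of entries), rows weakly
increasing, columns strictly increasing, first column `1, 2, …, r`, and the
number of `i`-entries in row `i` exceeds the number of boxes in row `i+1` by
exactly one. -/
structure TabA (r : ℕ) where
  row : Fin r → List ℕ
  entry_mem : ∀ i : Fin r, ∀ e ∈ row i, 1 ≤ e ∧ e ≤ r + 1
  row_weak : ∀ i : Fin r, (row i).Chain' (· ≤ ·)
  first_col : ∀ i : Fin r, (row i).head? = some (i.1 + 1)
  col_le : ∀ i : Fin r, ∀ h : i.1 + 1 < r,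
    (row ⟨i.1 + 1, h⟩).length ≤ (row i).length
  col_strict : ∀ i : Fin r, ∀ h : i.1 + 1 < r, ∀ j < (row ⟨i.1 + 1, h⟩).length,
    (row i).getD j 0 < (row ⟨i.1 + 1, h⟩).getD j 0
  marg_large : ∀ i : Fin r, (row i).count (i.1 + 1) =
    (if h : i.1 + 1 < r then (row ⟨i.1 + 1, h⟩).length else 0) + 1

/-- `ℓ_{i,k}(T)`: the number of `k`-entries in row `i` (rows of `T` are indexed by
`Fin r`, row `i : Fin r` having label `i+1`). -/
def ellA (r : ℕ) (T : TabA r) (i : Fin r) (k : ℕ) : ℕ := (T.row i).count k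

/-- `seg(T)`: the number of pairs `(i,k)` with `1 ≤ i < k ≤ r+1` and `ℓ_{i,k}(T) > 0`. -/
def segA (r : ℕ) (T : TabA r) : ℕ :=
  ∑ i : Fin r, ((Finset.Icc (i.1 + 2) (r + 1)).filter fun k => ellA r T i k ≠ 0).card

/-- The positive root `β_{i,k} = α_i + ⋯ + α_k` of `A_r`, as a vector of
coordinates in the simple roots. -/
def betaA (r : ℕ) (i k : ℕ) : Fin r → ℕ :=
  fun j => if i ≤ j.1 + 1 ∧ j.1 + 1 ≤ k then 1 else 0

/-- The set of positive roots `{β_{i,k} : 1 ≤ i ≤ k ≤ r}` of `A_r`. -/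
def posRootsA (r : ℕ) : Finset (Fin r → ℕ) :=
  ((Finset.Icc 1 r ×ˢ Finset.Icc 1 r).filter fun p => p.1 ≤ p.2).image
    fun p => betaA r p.1 p.2

/-- `Ξ(T)`, extended by zero to all vectors: `Ξ(T)(β_{i,k}) = ℓ_{i,k+1}(T)`. -/
def XiA (r : ℕ) (T : TabA r) (v : Fin r → ℕ) : ℕ :=
  ∑ i : Fin r, ∑ k ∈ Finset.Icc (i.1 + 1) r,
    if v = betaA r (i.1 + 1) k then ellA r T i (k + 1) else 0

/-- `-wt(T) = Σ_{1≤i<k≤r+1} ℓ_{i,k}(T)·(α_i + ⋯ + α_{k-1})`, in simple-root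
coordinates. -/
def negwtA (r : ℕ) (T : TabA r) : Fin r → ℕ :=
  ∑ i : Fin r, ∑ k ∈ Finset.Icc (i.1 + 2) (r + 1),
    ellA r T i k • betaA r (i.1 + 1) (k - 1)

/-- `wt(T)` as an integer vector in simple-root coordinates. -/
def wtA (r : ℕ) (T : TabA r) : Fin r → ℤ :=
  fun j => -(negwtA r T j : ℤ)

/-!
By marginal largeness the number of `i`-entries in row `i` is forced by the length of row
`i + 1`, so a tableau in `𝒯(∞)` is the same datum as the free family of counts `ℓ_{i,k}`,
`i < k`: it is recovered row by row from the bottom, and every family is realised by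
starting row `i` with the forced number of `i`'s, under which row `i + 1` (all of whose entries
exceed `i`) fits with strictly increasing columns. `Ξ` is this family reindexed along
`(i, k) ↦ β_{i,k-1}`, so `seg` and `wt` are sums over the positive roots.
-/

open Finset

lemma head?_le_of_pairwise {α : Type*} [Preorder α] {l : List α} {a x : α}
    (hl : l.Pairwise (· ≤ ·)) (ha : l.head? = some a) (hx : x ∈ l) : a ≤ x := by
  cases l with
  | nil => simp at hx
  | cons b t =>
    obtain rfl : b = a := by simpa using ha
    rcases List.mem_cons.1 hx with rfl | hx
    · exact le_rfl
    · exact (List.pairwise_cons.1 hl).1 x hx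

section SortedWithCounts

def sortedWithCounts (s n : ℕ) (c : ℕ → ℕ) : List ℕ :=
  (List.range' s n).flatMap fun k => List.replicate (c k) k

variable {s n : ℕ} {c : ℕ → ℕ}

lemma bounds_of_mem_sortedWithCounts {x : ℕ} (hx : x ∈ sortedWithCounts s n c) :
    s ≤ x ∧ x < s + n := by
  simp only [sortedWithCounts, List.mem_flatMap, List.mem_range'_1, List.mem_replicate] at hx
  obtain ⟨k, ⟨h1, h2⟩, _, rfl⟩ := hx
  omega

lemma pairwise_sortedWithCounts : (sortedWithCounts s n c).Pairwise (· ≤ ·) := by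
  induction n generalizing s with
  | zero => simp [sortedWithCounts]
  | succ n ih =>
    rw [sortedWithCounts, List.range'_succ, List.flatMap_cons, List.pairwise_append]
    refine ⟨List.pairwise_replicate.2 (Or.inr le_rfl), ih, fun a ha b hb => ?_⟩
    rw [List.eq_of_mem_replicate ha]
    have := (bounds_of_mem_sortedWithCounts hb).1
    omega

lemma count_sortedWithCounts (k : ℕ) :
    (sortedWithCounts s n c).count k = if s ≤ k ∧ k < s + n then c k else 0 := by
  induction n generalizing s with
  | zero => simp [sortedWithCounts]
  | succ n ih =>
    rw [sortedWithCounts, List.range'_succ, List.flatMap_cons, List.count_append]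
    rw [show (List.range' (s + 1) n).flatMap (fun k => List.replicate (c k) k) =
      sortedWithCounts (s + 1) n c from rfl, ih, List.count_replicate]
    by_cases h : s = k
    · subst h
      rw [if_pos (by simp), if_neg (by omega), if_pos (by omega), Nat.add_zero]
    · rw [if_neg (by simpa using h), Nat.zero_add]
      exact if_congr (by omega) rfl rfl

end SortedWithCounts

lemma betaA_inj {r i k i' k' : ℕ} (h1 : 1 ≤ i) (h2 : i ≤ k) (h3 : k ≤ r)
    (h1' : 1 ≤ i') (h2' : i' ≤ k') (h3' : k' ≤ r)
    (h : betaA r i k = betaA r i' k') : i = i' ∧ k = k' := by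
  have A := congrFun h ⟨i - 1, by omega⟩
  have B := congrFun h ⟨k - 1, by omega⟩
  have A' := congrFun h ⟨i' - 1, by omega⟩
  have B' := congrFun h ⟨k' - 1, by omega⟩
  simp only [betaA] at A B A' B'
  split_ifs at A B A' B' <;> omega

variable {r : ℕ}

lemma betaA_mem_posRootsA {i : Fin r} {k : ℕ} (hk : k ∈ Icc (i.1 + 2) (r + 1)) :
    betaA r (i.1 + 1) (k - 1) ∈ posRootsA r := by
  rw [mem_Icc] at hk
  rw [posRootsA, mem_image]
  exact ⟨(i.1 + 1, k - 1), by simp only [mem_filter, mem_product, mem_Icc]; omega, rfl⟩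

lemma exists_eq_betaA_of_mem_posRootsA {v : Fin r → ℕ} (hv : v ∈ posRootsA r) :
    ∃ i : Fin r, ∃ k ∈ Icc (i.1 + 2) (r + 1), v = betaA r (i.1 + 1) (k - 1) := by
  simp only [posRootsA, mem_image, mem_filter, mem_product, mem_Icc] at hv
  obtain ⟨⟨i, k⟩, ⟨⟨⟨hi, -⟩, -, hk⟩, hik⟩, rfl⟩ := hv
  refine ⟨⟨i - 1, by omega⟩, k + 1, mem_Icc.2 ⟨by simp only; omega, by omega⟩, ?_⟩
  simp only [Nat.sub_add_cancel hi, Nat.add_sub_cancel]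

lemma XiA_betaA (T : TabA r) {i : Fin r} {k : ℕ} (hk : k ∈ Icc (i.1 + 2) (r + 1)) :
    XiA r T (betaA r (i.1 + 1) (k - 1)) = ellA r T i k := by
  have hk' := mem_Icc.1 hk
  have hkm : k - 1 ∈ Icc (i.1 + 1) r := mem_Icc.2 ⟨by omega, by omega⟩
  rw [XiA, sum_eq_single_of_mem i (mem_univ i), sum_eq_single_of_mem (k - 1) hkm, if_pos rfl,
    Nat.sub_add_cancel (by omega)]
  · intro k' hk' hne
    rw [mem_Icc] at hk'
    exact if_neg fun h => hne (betaA_inj (by omega) hk'.1 hk'.2 (by omega) (by omega) (by omega)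
      h.symm).2
  · intro i' _ hne
    refine sum_eq_zero fun k' hk' => if_neg fun h => hne (Fin.ext ?_)
    rw [mem_Icc] at hk'
    have := (betaA_inj (by omega) hk'.1 hk'.2 (by omega) (by omega) (by omega) h.symm).1
    omega

lemma sum_posRootsA {M : Type*} [AddCommMonoid M] (f : (Fin r → ℕ) → M) :
    ∑ v ∈ posRootsA r, f v =
      ∑ i : Fin r, ∑ k ∈ Icc (i.1 + 2) (r + 1), f (betaA r (i.1 + 1) (k - 1)) := by
  rw [sum_sigma']
  symm
  refine sum_bij (fun a _ => betaA r (a.1.1 + 1) (a.2 - 1))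
    (fun a ha => betaA_mem_posRootsA (mem_sigma.1 ha).2) ?_ ?_ fun _ _ => rfl
  · rintro ⟨i, k⟩ hk ⟨i', k'⟩ hk' h
    simp only [mem_sigma, mem_Icc] at hk hk' h
    have := i.2
    have := i'.2
    obtain ⟨hii', hkk'⟩ :=
      betaA_inj (by omega) (by omega) (by omega) (by omega) (by omega) (by omega) h
    obtain rfl : i = i' := Fin.ext (by omega)
    obtain rfl : k = k' := by omega
    rfl
  · intro v hv
    obtain ⟨i, k, hk, rfl⟩ := exists_eq_betaA_of_mem_posRootsA hv
    exact ⟨⟨i, k⟩, mem_sigma.2 ⟨mem_univ i, hk⟩, rfl⟩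

namespace TabA

lemma row_pairwise (T : TabA r) (i : Fin r) : (T.row i).Pairwise (· ≤ ·) :=
  List.isChain_iff_pairwise.1 (T.row_weak i)

lemma le_of_mem_row (T : TabA r) (i : Fin r) {x : ℕ} (hx : x ∈ T.row i) : i.1 + 1 ≤ x :=
  head?_le_of_pairwise (T.row_pairwise i) (T.first_col i) hx

lemma ellA_eq_zero_of_lt (T : TabA r) (i : Fin r) {k : ℕ} (hk : k < i.1 + 1) :
    ellA r T i k = 0 :=
  List.count_eq_zero.2 fun hm => by have := T.le_of_mem_row i hm; omega

lemma ellA_eq_zero_of_gt (T : TabA r) (i : Fin r) {k : ℕ} (hk : r + 1 < k) :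
    ellA r T i k = 0 :=
  List.count_eq_zero.2 fun hm => by have := (T.entry_mem i k hm).2; omega

lemma row_eq_of_ellA_eq {T T' : TabA r} {i : Fin r}
    (hnext : ∀ h : i.1 + 1 < r, T.row ⟨i.1 + 1, h⟩ = T'.row ⟨i.1 + 1, h⟩)
    (h : ∀ k ∈ Icc (i.1 + 2) (r + 1), ellA r T i k = ellA r T' i k) :
    T.row i = T'.row i := by
  refine List.Perm.eq_of_pairwise' (T.row_pairwise i) (T'.row_pairwise i)
    (List.perm_iff_count.2 fun k => ?_)
  change ellA r T i k = ellA r T' i k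
  obtain hk | rfl | hk | hk :
      k < i.1 + 1 ∨ k = i.1 + 1 ∨ k ∈ Icc (i.1 + 2) (r + 1) ∨ r + 1 < k := by
    rw [mem_Icc]; omega
  · rw [T.ellA_eq_zero_of_lt i hk, T'.ellA_eq_zero_of_lt i hk]
  · rw [ellA, ellA, T.marg_large i, T'.marg_large i]
    by_cases hi : i.1 + 1 < r
    · rw [dif_pos hi, dif_pos hi, hnext hi]
    · rw [dif_neg hi, dif_neg hi]
  · exact h k hk
  · rw [T.ellA_eq_zero_of_gt i hk, T'.ellA_eq_zero_of_gt i hk]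

theorem ext_of_ellA_eq {T T' : TabA r}
    (h : ∀ i : Fin r, ∀ k ∈ Icc (i.1 + 2) (r + 1), ellA r T i k = ellA r T' i k) :
    T = T' := by
  have rows : ∀ n, ∀ i : Fin r, r ≤ i.1 + n → T.row i = T'.row i := by
    intro n
    induction n with
    | zero => intro i hi; omega
    | succ n ih =>
      exact fun i hi => row_eq_of_ellA_eq (fun hnext => ih _ (by simp only; omega)) (h i)
  have hrow : T.row = T'.row := funext fun i => rows r i (by omega)
  cases T; cases T'; cases hrow; rfl

def ofCountsRow (r : ℕ) (c : ℕ → ℕ → ℕ) (i : ℕ) : List ℕ :=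
  if i < r then
    List.replicate ((ofCountsRow r c (i + 1)).length + 1) (i + 1) ++
      sortedWithCounts (i + 2) (r - i) (c i)
  else []
termination_by r - i

variable {c : ℕ → ℕ → ℕ} {i : ℕ}

lemma ofCountsRow_of_lt (h : i < r) : ofCountsRow r c i =
    List.replicate ((ofCountsRow r c (i + 1)).length + 1) (i + 1) ++
      sortedWithCounts (i + 2) (r - i) (c i) := by
  rw [ofCountsRow, if_pos h]

lemma mem_ofCountsRow (h : i < r) {x : ℕ} (hx : x ∈ ofCountsRow r c i) :
    x = i + 1 ∨ i + 2 ≤ x ∧ x ≤ r + 1 := by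
  rw [ofCountsRow_of_lt h, List.mem_append] at hx
  rcases hx with hx | hx
  · exact Or.inl (List.eq_of_mem_replicate hx)
  · have := bounds_of_mem_sortedWithCounts hx
    omega

lemma pairwise_ofCountsRow (h : i < r) : (ofCountsRow r c i).Pairwise (· ≤ ·) := by
  rw [ofCountsRow_of_lt h, List.pairwise_append]
  refine ⟨List.pairwise_replicate.2 (Or.inr le_rfl), pairwise_sortedWithCounts, ?_⟩
  intro a ha b hb
  rw [List.eq_of_mem_replicate ha]
  have := (bounds_of_mem_sortedWithCounts hb).1
  omega

lemma count_self_ofCountsRow (h : i < r) :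
    (ofCountsRow r c i).count (i + 1) = (ofCountsRow r c (i + 1)).length + 1 := by
  rw [ofCountsRow_of_lt h, List.count_append, List.count_replicate_self,
    count_sortedWithCounts, if_neg (by omega), Nat.add_zero]

lemma count_ofCountsRow {k : ℕ} (hk : i + 2 ≤ k) (hkr : k ≤ r + 1) :
    (ofCountsRow r c i).count k = c i k := by
  rw [ofCountsRow_of_lt (by omega), List.count_append, List.count_replicate,
    count_sortedWithCounts, if_neg (by simp only [beq_iff_eq]; omega), if_pos ⟨hk, by omega⟩,
    Nat.zero_add]

/-- Row `i : Fin r` (whose first entry is `i + 1`) holds `c i k` entries `k` for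
`i + 2 ≤ k ≤ r + 1`. -/
def ofCounts (r : ℕ) (c : ℕ → ℕ → ℕ) : TabA r where
  row i := ofCountsRow r c i.1
  entry_mem i e he := by
    have := i.2
    rcases mem_ofCountsRow i.2 he with rfl | h <;> omega
  row_weak i := List.isChain_iff_pairwise.2 (pairwise_ofCountsRow i.2)
  first_col i := by rw [ofCountsRow_of_lt i.2, List.replicate_succ]; rfl
  col_le i h := by
    change (ofCountsRow r c (i.1 + 1)).length ≤ (ofCountsRow r c i.1).length
    rw [ofCountsRow_of_lt i.2, List.length_append, List.length_replicate]
    omega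
  col_strict i h j hj := by
    change (ofCountsRow r c i.1).getD j 0 < (ofCountsRow r c (i.1 + 1)).getD j 0
    replace hj : j < (ofCountsRow r c (i.1 + 1)).length := hj
    have hrep : j < (List.replicate ((ofCountsRow r c (i.1 + 1)).length + 1) (i.1 + 1)).length := by
      rw [List.length_replicate]; omega
    rw [ofCountsRow_of_lt i.2, List.getD_append _ _ _ _ hrep, List.getD_eq_getElem _ _ hrep,
      List.getElem_replicate, List.getD_eq_getElem _ _ hj]
    rcases mem_ofCountsRow h (List.getElem_mem hj) with h' | h' <;> omega
  marg_large i := by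
    rw [count_self_ofCountsRow i.2]
    split_ifs with h
    · rfl
    · rw [ofCountsRow, if_neg h, List.length_nil]

lemma ellA_ofCounts {i : Fin r} {k : ℕ} (hk : k ∈ Icc (i.1 + 2) (r + 1)) :
    ellA r (ofCounts r c) i k = c i k :=
  count_ofCountsRow (mem_Icc.1 hk).1 (mem_Icc.1 hk).2

end TabA

open TabA

theorem XiA_bijective :
    Function.Bijective (fun (T : TabA r) (α : {v // v ∈ posRootsA r}) => XiA r T α.1) := by
  refine ⟨fun T T' h => ext_of_ellA_eq fun i k hk => ?_, fun g => ?_⟩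
  · rw [← XiA_betaA T hk, ← XiA_betaA T' hk]
    exact congrFun h ⟨_, betaA_mem_posRootsA hk⟩
  · refine ⟨ofCounts r fun i k =>
        if h : betaA r (i + 1) (k - 1) ∈ posRootsA r then g ⟨_, h⟩ else 0,
      funext fun ⟨v, hv⟩ => ?_⟩
    obtain ⟨i, k, hk, rfl⟩ := exists_eq_betaA_of_mem_posRootsA hv
    simp only [XiA_betaA _ hk, ellA_ofCounts hk, dif_pos hv]

theorem segA_eq_card_filter_XiA_ne_zero (T : TabA r) :
    segA r T = ((posRootsA r).filter fun v => XiA r T v ≠ 0).card := by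
  rw [card_filter, sum_posRootsA, segA]
  refine sum_congr rfl fun i _ => ?_
  rw [card_filter]
  exact sum_congr rfl fun k hk => by rw [XiA_betaA T hk]

theorem negwtA_eq_sum_XiA_smul (T : TabA r) :
    negwtA r T = ∑ v ∈ posRootsA r, XiA r T v • v := by
  rw [sum_posRootsA, negwtA]
  exact sum_congr rfl fun i _ => sum_congr rfl fun k hk => by rw [XiA_betaA T hk]

theorem stmt1_general (r : ℕ) :
    Function.Bijective
      (fun (T : TabA r) (α : {v // v ∈ posRootsA r}) => XiA r T α.1) ∧
    (∀ T : TabA r,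
      segA r T = ((posRootsA r).filter fun v => XiA r T v ≠ 0).card) ∧
    (∀ T : TabA r,
      wtA r T = fun j => -(((∑ v ∈ posRootsA r, XiA r T v • v) j : ℕ) : ℤ)) :=
  ⟨XiA_bijective, segA_eq_card_filter_XiA_ne_zero, fun T => by
    rw [← negwtA_eq_sum_XiA_smul]; rfl⟩

/-- `Ξ` is a bijection from `𝒯(∞)` onto the set of all functions
from the positive roots of `A_r` to `ℕ`; moreover `seg(T)` is the number of
positive roots where `Ξ(T)` is nonzero, and `wt(T) = -Σ_α Ξ(T)(α)·α`. -/
theorem stmt1 (r : ℕ) (hr : 1 ≤ r) :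
    Function.Bijective
      (fun (T : TabA r) (α : {v // v ∈ posRootsA r}) => XiA r T α.1) ∧
    (∀ T : TabA r,
      segA r T = ((posRootsA r).filter fun v => XiA r T v ≠ 0).card) ∧
    (∀ T : TabA r,
      wtA r T = fun j => -(((∑ v ∈ posRootsA r, XiA r T v • v) j : ℕ) : ℤ)) :=
  stmt1_general r
end

section
/- The map Ξ is a bijection from 𝒯(∞) onto the set of all functions from the positive roots {β_{i,k} : 1 ≤ i ≤ k ≤ r} ∪ {γ_{i,k} : 1 ≤ i < k ≤ r} of B_r to the nonnegative integers. Moreover, for every T ∈ 𝒯(∞), seg(T) = seg′(T) − e_B(T) equals the number of positive roots α with Ξ(T)(α) ≠ 0. -/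
/-- Marginally large semistandard Young tableaux of type `B_r`, on the totally
ordered alphabet `{1 ≺ ⋯ ≺ r ≺ 0 ≺ r̄ ≺ ⋯ ≺ 1̄}`, encoded by the order
isomorphism onto `{1, …, 2r+1} ⊂ ℕ` sending `k ↦ k`, `0 ↦ r+1`, `k̄ ↦ 2r+2-k`.
Conditions: exactly `r` rows, rows weakly increasing, columns strictly
increasing, first column `1, …, r`, every entry of row `i` is `≼ ī`, the entry
`0` occurs at most once in each row, and the number of `i`-entries in row `i`
exceeds the number of boxes in row `i+1` by exactly one. -/
structure TabB (r : ℕ) where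
  row : Fin r → List ℕ
  entry_mem : ∀ i : Fin r, ∀ e ∈ row i, 1 ≤ e ∧ e ≤ 2 * r + 1
  row_weak : ∀ i : Fin r, (row i).Chain' (· ≤ ·)
  first_col : ∀ i : Fin r, (row i).head? = some (i.1 + 1)
  row_bound : ∀ i : Fin r, ∀ e ∈ row i, e ≤ 2 * r + 1 - i.1
  zero_once : ∀ i : Fin r, (row i).count (r + 1) ≤ 1
  col_le : ∀ i : Fin r, ∀ h : i.1 + 1 < r,
    (row ⟨i.1 + 1, h⟩).length ≤ (row i).length
  col_strict : ∀ i : Fin r, ∀ h : i.1 + 1 < r, ∀ j < (row ⟨i.1 + 1, h⟩).length,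
    (row i).getD j 0 < (row ⟨i.1 + 1, h⟩).getD j 0
  marg_large : ∀ i : Fin r, (row i).count (i.1 + 1) =
    (if h : i.1 + 1 < r then (row ⟨i.1 + 1, h⟩).length else 0) + 1

/-- `ℓ_{i,x}(T)`: the number of entries with code `x` in row `i` (row `i : Fin r`
has label `i+1`; the symbol `0` has code `r+1` and `k̄` has code `2r+2-k`). -/
def ellB (r : ℕ) (T : TabB r) (i : Fin r) (x : ℕ) : ℕ := (T.row i).count x

/-- `seg′(T)`: the number of pairs `(i,x)` with `x ≻ i` and `ℓ_{i,x}(T) > 0`. -/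
def segB' (r : ℕ) (T : TabB r) : ℕ :=
  ∑ i : Fin r, ((Finset.Icc (i.1 + 2) (2 * r + 1)).filter fun x => ellB r T i x ≠ 0).card

/-- `e_B(T)`: the number of rows `i` containing both a `0`-segment and an
`ī`-segment. -/
def eB (r : ℕ) (T : TabB r) : ℕ :=
  (Finset.univ.filter fun i : Fin r =>
    ellB r T i (r + 1) ≠ 0 ∧ ellB r T i (2 * r + 1 - i.1) ≠ 0).card

/-- `seg(T) = seg′(T) - e_B(T)`. -/
def segB (r : ℕ) (T : TabB r) : ℕ := segB' r T - eB r T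

/-- The positive root `β_{i,k} = α_i + ⋯ + α_k` of `B_r` (`1 ≤ i ≤ k ≤ r`), in
simple-root coordinates. -/
def betaB (r : ℕ) (i k : ℕ) : Fin r → ℕ :=
  fun j => if i ≤ j.1 + 1 ∧ j.1 + 1 ≤ k then 1 else 0

/-- The positive root `γ_{i,k} = α_i + ⋯ + α_{k-1} + 2α_k + ⋯ + 2α_r` of `B_r`
(`1 ≤ i < k ≤ r`), in simple-root coordinates. -/
def gammaB (r : ℕ) (i k : ℕ) : Fin r → ℕ :=
  fun j => if i ≤ j.1 + 1 ∧ j.1 + 1 ≤ k - 1 then 1 else if k ≤ j.1 + 1 then 2 else 0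

/-- The set of positive roots of `B_r`. -/
def posRootsB (r : ℕ) : Finset (Fin r → ℕ) :=
  ((Finset.Icc 1 r ×ˢ Finset.Icc 1 r).filter fun p => p.1 ≤ p.2).image
      (fun p => betaB r p.1 p.2) ∪
    ((Finset.Icc 1 r ×ˢ Finset.Icc 1 r).filter fun p => p.1 < p.2).image
      (fun p => gammaB r p.1 p.2)

/-- `Ξ(T)`, extended by zero to all vectors: `Ξ(T)(β_{i,k-1}) = ℓ_{i,k}(T)` for
`i < k ≤ r`, `Ξ(T)(β_{i,r}) = 2ℓ_{i,ī}(T) + ℓ_{i,0}(T)`, and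
`Ξ(T)(γ_{i,k}) = ℓ_{i,k̄}(T)` for `i < k ≤ r`. -/
def XiB (r : ℕ) (T : TabB r) (v : Fin r → ℕ) : ℕ :=
  ∑ i : Fin r,
    ((∑ k ∈ Finset.Icc (i.1 + 2) r,
        if v = betaB r (i.1 + 1) (k - 1) then ellB r T i k else 0) +
      (if v = betaB r (i.1 + 1) r then
        2 * ellB r T i (2 * r + 1 - i.1) + ellB r T i (r + 1) else 0) +
      (∑ k ∈ Finset.Icc (i.1 + 2) r,
        if v = gammaB r (i.1 + 1) k then ellB r T i (2 * r + 2 - k) else 0))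

/-- `-wt(T) = Σ_α Ξ(T)(α)·α`, in simple-root coordinates. -/
def negwtB (r : ℕ) (T : TabB r) : Fin r → ℕ :=
  ∑ v ∈ posRootsB r, XiB r T v • v

/-!
A tableau in `𝒯(∞)` is determined by the numbers `ℓ_{i,x}(T)` of its entries `x ≻ i`: working
up from the last row, marginal largeness fixes the number of entries `i` in row `i`. Conversely
every family of such numbers with `ℓ_{i,0} ≤ 1` comes from a tableau. The positive roots
correspond bijectively to the pairs `(i, x)` with `x ≠ 0`, and `Ξ(T)` reads off `ℓ_{i,x}(T)` at
the corresponding root, except that `0` and `ī` share `β_{i,r}`; there `ℓ_{i,0} ≤ 1` lets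
`2ℓ_{i,ī} + ℓ_{i,0}` recover both. Hence `Ξ` is a bijection, and the shared root is also the
only place where `seg′` counts two segments for one nonzero value of `Ξ(T)`, namely when both are
present, which is what `e_B` subtracts.
-/

def runList (c : ℕ → ℕ) (s n : ℕ) : List ℕ :=
  (List.range' s n).flatMap fun x => List.replicate (c x) x

lemma mem_runList {c : ℕ → ℕ} {s n e : ℕ} (h : e ∈ runList c s n) : s ≤ e ∧ e < s + n := by
  obtain ⟨x, hx, he⟩ := List.mem_flatMap.mp h
  rw [List.eq_of_mem_replicate he]
  exact List.mem_range'_1.mp hx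

lemma count_runList (c : ℕ → ℕ) (s n x : ℕ) :
    (runList c s n).count x = if s ≤ x ∧ x < s + n then c x else 0 := by
  induction n generalizing s with
  | zero => simp [runList]
  | succ n ih =>
    rw [runList, List.range'_succ, List.flatMap_cons, ← runList, List.count_append, ih,
      List.count_replicate]
    simp only [beq_iff_eq]
    rcases eq_or_ne s x with rfl | hne <;> split_ifs <;> omega

lemma pairwise_runList (c : ℕ → ℕ) (s n : ℕ) : (runList c s n).Pairwise (· ≤ ·) := by
  refine List.pairwise_flatMap.mpr ⟨fun x _ => List.pairwise_replicate.mpr (.inr le_rfl), ?_⟩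
  refine (List.pairwise_lt_range' (s := s) (n := n)).imp fun hxy a ha b hb => ?_
  rw [List.eq_of_mem_replicate ha, List.eq_of_mem_replicate hb]
  exact hxy.le

namespace TabB

variable {r : ℕ}

lemma le_of_mem_row (T : TabB r) (i : Fin r) {e : ℕ} (he : e ∈ T.row i) : i.1 + 1 ≤ e := by
  obtain ⟨hd, tl, hrow⟩ := List.exists_cons_of_ne_nil (List.ne_nil_of_mem he)
  have hhd := T.first_col i
  have hsorted := List.isChain_iff_pairwise.mp (T.row_weak i)
  rw [hrow, List.head?_cons, Option.some.injEq] at hhd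
  rw [hrow] at he hsorted
  rcases List.mem_cons.mp he with rfl | he
  · omega
  · exact hhd ▸ List.rel_of_pairwise_cons hsorted he

lemma row_eq_of_ellB_eq (T T' : TabB r) (i : Fin r)
    (hlen : (if h : i.1 + 1 < r then (T.row ⟨i.1 + 1, h⟩).length else 0) =
      (if h : i.1 + 1 < r then (T'.row ⟨i.1 + 1, h⟩).length else 0))
    (hc : ∀ x, i.1 + 2 ≤ x → ellB r T i x = ellB r T' i x) :
    T.row i = T'.row i := by
  refine List.Perm.eq_of_pairwise' (List.isChain_iff_pairwise.mp (T.row_weak i))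
    (List.isChain_iff_pairwise.mp (T'.row_weak i)) (List.perm_iff_count.mpr fun x => ?_)
  rcases lt_trichotomy x (i.1 + 1) with hlt | rfl | hgt
  · rw [List.count_eq_zero.mpr fun hx => by have := T.le_of_mem_row i hx; omega,
      List.count_eq_zero.mpr fun hx => by have := T'.le_of_mem_row i hx; omega]
  · rw [T.marg_large i, T'.marg_large i, hlen]
  · exact hc x hgt

lemma eq_of_ellB_eq {T T' : TabB r}
    (hc : ∀ i : Fin r, ∀ x, i.1 + 2 ≤ x → ellB r T i x = ellB r T' i x) : T = T' := by
  have hrow : ∀ n, ∀ i : Fin r, r - i.1 ≤ n → T.row i = T'.row i := by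
    intro n
    induction n with
    | zero => exact fun i hi => absurd hi (by omega)
    | succ n ih =>
      refine fun i hi => row_eq_of_ellB_eq T T' i ?_ (hc i)
      split_ifs with h
      · rw [ih ⟨i.1 + 1, h⟩ (by simp only; omega)]
      · rfl
  cases T; cases T'
  congr
  exact funext fun i => hrow _ i le_rfl

/-- The letters `i + 2, …, ī` with multiplicities `g i`, preceded by as many `i + 1` as marginal
largeness forces. -/
def rowOfCounts (g : Fin r → ℕ → ℕ) (i : ℕ) : List ℕ :=
  if h : i < r then
    List.replicate ((rowOfCounts g (i + 1)).length + 1) (i + 1) ++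
      runList (g ⟨i, h⟩) (i + 2) (2 * r - 2 * i)
  else []
termination_by r - i

lemma rowOfCounts_of_lt (g : Fin r → ℕ → ℕ) {i : ℕ} (h : i < r) :
    rowOfCounts g i = List.replicate ((rowOfCounts g (i + 1)).length + 1) (i + 1) ++
      runList (g ⟨i, h⟩) (i + 2) (2 * r - 2 * i) := by
  rw [rowOfCounts, dif_pos h]

lemma count_rowOfCounts (g : Fin r → ℕ → ℕ) (i : Fin r) (x : ℕ) :
    (rowOfCounts g i).count x =
      (if x = i + 1 then (rowOfCounts g (i + 1)).length + 1 else 0) +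
      (if i + 2 ≤ x ∧ x ≤ 2 * r + 1 - i then g i x else 0) := by
  rw [rowOfCounts_of_lt g i.2, List.count_append, List.count_replicate, count_runList]
  simp only [beq_iff_eq, Fin.eta]
  split_ifs <;> omega

lemma mem_rowOfCounts {g : Fin r → ℕ → ℕ} {i e : ℕ} (h : i < r) (he : e ∈ rowOfCounts g i) :
    i + 1 ≤ e ∧ e ≤ 2 * r + 1 - i := by
  rw [rowOfCounts_of_lt g h, List.mem_append] at he
  rcases he with he | he
  · rw [List.eq_of_mem_replicate he]; omega
  · have := mem_runList he; omega

lemma pairwise_rowOfCounts (g : Fin r → ℕ → ℕ) (i : ℕ) :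
    (rowOfCounts g i).Pairwise (· ≤ ·) := by
  by_cases h : i < r
  · rw [rowOfCounts_of_lt g h, List.pairwise_append]
    refine ⟨List.pairwise_replicate.mpr (.inr le_rfl), pairwise_runList _ _ _, ?_⟩
    intro a ha b hb
    rw [List.eq_of_mem_replicate ha]
    have := (mem_runList hb).1
    omega
  · rw [rowOfCounts, dif_neg h]
    exact List.Pairwise.nil

def ofCounts (g : Fin r → ℕ → ℕ) (hg : ∀ i, g i (r + 1) ≤ 1) : TabB r where
  row i := rowOfCounts g i.1
  entry_mem i e he := by have := mem_rowOfCounts i.2 he; omega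
  row_weak i := List.isChain_iff_pairwise.mpr (pairwise_rowOfCounts g i.1)
  first_col i := by rw [rowOfCounts_of_lt g i.2, List.replicate_succ]; rfl
  row_bound i e he := (mem_rowOfCounts i.2 he).2
  zero_once i := by
    rw [count_rowOfCounts g i, if_neg (by omega)]
    have := hg i
    split_ifs <;> omega
  col_le i h := by
    show (rowOfCounts g (i.1 + 1)).length ≤ (rowOfCounts g i.1).length
    rw [rowOfCounts_of_lt g i.2, List.length_append, List.length_replicate]
    omega
  col_strict i h j hj := by
    show (rowOfCounts g i.1).getD j 0 < (rowOfCounts g (i.1 + 1)).getD j 0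
    replace hj : j < (rowOfCounts g (i.1 + 1)).length := hj
    rw [rowOfCounts_of_lt g i.2, List.getD_append _ _ _ _ (by simp; omega),
      List.getD_replicate _ (by omega), List.getD_eq_getElem _ _ hj]
    exact (mem_rowOfCounts h (List.getElem_mem hj)).1
  marg_large i := by
    rw [count_rowOfCounts g i, if_pos rfl, if_neg (by omega), add_zero]
    split_ifs with h
    · rfl
    · rw [rowOfCounts, dif_neg h]; rfl

lemma ellB_ofCounts (g : Fin r → ℕ → ℕ) (hg : ∀ i, g i (r + 1) ≤ 1) (i : Fin r) {x : ℕ}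
    (hx : i.1 + 2 ≤ x) (hx' : x ≤ 2 * r + 1 - i.1) : ellB r (ofCounts g hg) i x = g i x := by
  show (rowOfCounts g i.1).count x = g i x
  rw [count_rowOfCounts g i, if_neg (by omega), if_pos ⟨hx, hx'⟩, zero_add]

end TabB

section Roots

variable {r : ℕ}

lemma betaB_inj {a b a' b' : ℕ} (ha : 1 ≤ a) (hab : a ≤ b) (hb : b ≤ r)
    (ha' : 1 ≤ a') (hab' : a' ≤ b') (hb' : b' ≤ r) (h : betaB r a b = betaB r a' b') :
    a = a' ∧ b = b' := by
  have h1 := congrFun h ⟨a - 1, by omega⟩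
  have h2 := congrFun h ⟨a' - 1, by omega⟩
  have h3 := congrFun h ⟨b - 1, by omega⟩
  have h4 := congrFun h ⟨b' - 1, by omega⟩
  simp only [betaB] at h1 h2 h3 h4
  constructor
  · split_ifs at h1 h2 <;> omega
  · split_ifs at h3 h4 <;> omega

/-- `γ_{a,b}` starts at `α_a` and has coefficient `2` from `α_b` on. -/
lemma gammaB_inj {a b a' b' : ℕ} (ha : 1 ≤ a) (hab : a < b) (hb : b ≤ r)
    (ha' : 1 ≤ a') (hab' : a' < b') (hb' : b' ≤ r) (h : gammaB r a b = gammaB r a' b') :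
    a = a' ∧ b = b' := by
  have h1 := congrFun h ⟨a - 1, by omega⟩
  have h2 := congrFun h ⟨a' - 1, by omega⟩
  have h3 := congrFun h ⟨b - 1, by omega⟩
  have h4 := congrFun h ⟨b' - 1, by omega⟩
  simp only [gammaB] at h1 h2 h3 h4
  constructor
  · split_ifs at h1 h2 <;> omega
  · split_ifs at h3 h4 <;> omega

/-- The coefficient of `α_r` tells the two families apart. -/
lemma betaB_ne_gammaB (a b a' : ℕ) {b' : ℕ} (hb' : 0 < b') (hbr : b' ≤ r) :
    betaB r a b ≠ gammaB r a' b' := by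
  intro h
  have h1 := congrFun h ⟨r - 1, by omega⟩
  simp only [betaB, gammaB] at h1
  split_ifs at h1 <;> omega

variable (r) in
/-- The codes of the letters `x ≻ i` that may occur in row `i`, apart from `0`. -/
def rowLettersB (i : ℕ) : Finset ℕ := Finset.Icc (i + 2) r ∪ Finset.Icc (r + 2) (2 * r + 1 - i)

lemma mem_rowLettersB {i x : ℕ} :
    x ∈ rowLettersB r i ↔ i + 2 ≤ x ∧ x ≤ 2 * r + 1 - i ∧ x ≠ r + 1 := by
  simp only [rowLettersB, Finset.mem_union, Finset.mem_Icc]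
  omega

lemma sum_rowLettersB {M : Type*} [AddCommMonoid M] (f : ℕ → M) {i : ℕ} (hi : i < r) :
    ∑ x ∈ rowLettersB r i, f x =
      ∑ k ∈ Finset.Icc (i + 2) r, f k +
        (f (2 * r + 1 - i) + ∑ k ∈ Finset.Icc (i + 2) r, f (2 * r + 2 - k)) := by
  have hdisj : Disjoint (Finset.Icc (i + 2) r) (Finset.Icc (r + 2) (2 * r + 1 - i)) :=
    Finset.disjoint_left.mpr fun x hx hx' => by
      simp only [Finset.mem_Icc] at hx hx'; omega
  have hreflect : ∑ x ∈ Finset.Icc (r + 2) (2 * r + 1 - i), f x =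
      ∑ k ∈ Finset.Icc (i + 1) r, f (2 * r + 2 - k) :=
    Finset.sum_nbij' (2 * r + 2 - ·) (2 * r + 2 - ·)
      (fun x hx => by simp only [Finset.mem_Icc] at hx ⊢; omega)
      (fun x hx => by simp only [Finset.mem_Icc] at hx ⊢; omega)
      (fun x hx => by simp only [Finset.mem_Icc] at hx ⊢; omega)
      (fun x hx => by simp only [Finset.mem_Icc] at hx ⊢; omega)
      (fun x hx => by simp only [Finset.mem_Icc] at hx; congr 1; omega)
  rw [rowLettersB, Finset.sum_union hdisj, hreflect,
    ← Finset.insert_Icc_add_one_left_eq_Icc (by omega : i + 1 ≤ r),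
    Finset.sum_insert (by simp), show 2 * r + 2 - (i + 1) = 2 * r + 1 - i by omega]
  rfl

variable (r) in
def rootIdxB : Finset (Fin r × ℕ) :=
  (Finset.univ ×ˢ Finset.range (2 * r + 2)).filter fun p => p.2 ∈ rowLettersB r p.1

lemma mem_rootIdxB {p : Fin r × ℕ} : p ∈ rootIdxB r ↔ p.2 ∈ rowLettersB r p.1 := by
  simp only [rootIdxB, Finset.mem_filter, Finset.mem_product, Finset.mem_univ, Finset.mem_range,
    true_and, and_iff_right_iff_imp, mem_rowLettersB]
  omega

lemma mk_mem_rootIdxB {i : Fin r} {x : ℕ} :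
    (i, x) ∈ rootIdxB r ↔ i + 2 ≤ x ∧ x ≤ 2 * r + 1 - i ∧ x ≠ r + 1 :=
  mem_rootIdxB.trans mem_rowLettersB

lemma sum_rootIdxB {M : Type*} [AddCommMonoid M] (f : Fin r × ℕ → M) :
    ∑ p ∈ rootIdxB r, f p = ∑ i : Fin r, ∑ x ∈ rowLettersB r i, f (i, x) :=
  Finset.sum_finset_product _ _ _ fun p => by
    simp only [mem_rootIdxB, Finset.mem_univ, true_and]

variable (r) in
/-- The positive root at which `Ξ(T)` records `ℓ_{i,x}(T)`: the letter `k ≤ r` gives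
`β_{i,k-1}`, the letter `ī` gives `β_{i,r}` (shared with the letter `0`), and `k̄` gives
`γ_{i,k}`. -/
def rootB (p : Fin r × ℕ) : Fin r → ℕ :=
  if p.2 ≤ r then betaB r (p.1 + 1) (p.2 - 1)
  else if p.2 = 2 * r + 1 - p.1 then betaB r (p.1 + 1) r
  else gammaB r (p.1 + 1) (2 * r + 2 - p.2)

lemma rootB_of_le {i : Fin r} {x : ℕ} (hx : x ≤ r) : rootB r (i, x) = betaB r (i + 1) (x - 1) :=
  if_pos hx

lemma rootB_of_eq {i : Fin r} {x : ℕ} (hx : x = 2 * r + 1 - i) :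
    rootB r (i, x) = betaB r (i + 1) r := by
  rw [rootB, if_neg (by omega), if_pos hx]

lemma rootB_of_gt {i : Fin r} {x : ℕ} (hx : r < x) (hx' : x ≠ 2 * r + 1 - i) :
    rootB r (i, x) = gammaB r (i + 1) (2 * r + 2 - x) := by
  rw [rootB, if_neg (by omega), if_neg hx']

lemma rootB_injOn : Set.InjOn (rootB r) (rootIdxB r) := by
  rintro ⟨i, x⟩ hp ⟨i', x'⟩ hp' h
  simp only [Finset.mem_coe, mem_rootIdxB, mem_rowLettersB] at hp hp'
  have hi := i.2
  have hi' := i'.2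
  suffices i.1 = i'.1 ∧ x = x' from Prod.ext (Fin.ext this.1) this.2
  simp only [rootB] at h
  split_ifs at h
  all_goals first
    | exact absurd h (betaB_ne_gammaB _ _ _ (by omega) (by omega))
    | exact absurd h.symm (betaB_ne_gammaB _ _ _ (by omega) (by omega))
    | (have := betaB_inj (by omega) (by omega) (by omega) (by omega) (by omega) (by omega) h
       omega)
    | (have := gammaB_inj (by omega) (by omega) (by omega) (by omega) (by omega) (by omega) h
       omega)

lemma posRootsB_eq_image : posRootsB r = (rootIdxB r).image (rootB r) := by
  ext v
  simp only [posRootsB, Finset.mem_union, Finset.mem_image, Finset.mem_filter,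
    Finset.mem_product, Finset.mem_Icc, Prod.exists, mem_rootIdxB, mem_rowLettersB]
  constructor
  · rintro (⟨a, b, ⟨⟨⟨ha, -⟩, -, hb⟩, hab⟩, rfl⟩ | ⟨a, b, ⟨⟨⟨ha, -⟩, -, hb⟩, hab⟩, rfl⟩) <;>
      obtain ⟨i, rfl⟩ : ∃ i : Fin r, i.1 + 1 = a := ⟨⟨a - 1, by omega⟩, by dsimp only; omega⟩
    · rcases lt_or_eq_of_le hb with hb | rfl
      · exact ⟨i, b + 1, by omega, by rw [rootB_of_le (by omega), Nat.add_sub_cancel]⟩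
      · exact ⟨i, 2 * b + 1 - i, by omega, rootB_of_eq rfl⟩
    · refine ⟨i, 2 * r + 2 - b, by omega, ?_⟩
      rw [rootB_of_gt (by omega) (by omega), show 2 * r + 2 - (2 * r + 2 - b) = b by omega]
  · rintro ⟨i, x, ⟨hx, hx', hx0⟩, rfl⟩
    have hi := i.2
    rcases le_or_gt x r with hxr | hxr
    · exact .inl ⟨i + 1, x - 1, by omega, (rootB_of_le hxr).symm⟩
    · by_cases hbar : x = 2 * r + 1 - i
      · exact .inl ⟨i + 1, r, by omega, (rootB_of_eq hbar).symm⟩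
      · exact .inr ⟨i + 1, 2 * r + 2 - x, by omega, (rootB_of_gt hxr hbar).symm⟩

variable (r) in
def xiValB (T : TabB r) (p : Fin r × ℕ) : ℕ :=
  if p.2 = 2 * r + 1 - p.1 then 2 * ellB r T p.1 p.2 + ellB r T p.1 (r + 1) else ellB r T p.1 p.2

lemma xiValB_of_ne (T : TabB r) {i : Fin r} {x : ℕ} (hx : x ≠ 2 * r + 1 - i) :
    xiValB r T (i, x) = ellB r T i x :=
  if_neg hx

lemma xiValB_of_eq (T : TabB r) (i : Fin r) :
    xiValB r T (i, 2 * r + 1 - i) = 2 * ellB r T i (2 * r + 1 - i) + ellB r T i (r + 1) :=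
  if_pos rfl

lemma XiB_eq_sum (T : TabB r) (v : Fin r → ℕ) :
    XiB r T v = ∑ p ∈ rootIdxB r, if v = rootB r p then xiValB r T p else 0 := by
  rw [XiB, sum_rootIdxB]
  refine Finset.sum_congr rfl fun i _ => ?_
  have hi := i.2
  rw [sum_rowLettersB _ hi, add_assoc]
  congr 1
  · refine Finset.sum_congr rfl fun k hk => ?_
    rw [Finset.mem_Icc] at hk
    have hne : k ≠ 2 * r + 1 - i := by omega
    rw [rootB_of_le hk.2, xiValB_of_ne T hne]
  congr 1
  · rw [rootB_of_eq rfl, xiValB_of_eq]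
  · refine Finset.sum_congr rfl fun k hk => ?_
    rw [Finset.mem_Icc] at hk
    have hne : 2 * r + 2 - k ≠ 2 * r + 1 - i := by omega
    rw [rootB_of_gt (by omega) hne, xiValB_of_ne T hne,
      show 2 * r + 2 - (2 * r + 2 - k) = k by omega]

lemma XiB_rootB (T : TabB r) {p : Fin r × ℕ} (hp : p ∈ rootIdxB r) :
    XiB r T (rootB r p) = xiValB r T p := by
  rw [XiB_eq_sum, Finset.sum_eq_single_of_mem p hp
    fun q hq hqp => if_neg fun h => hqp (rootB_injOn hq hp h.symm), if_pos rfl]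

end Roots

section Bijection

variable {r : ℕ}

lemma ellB_eq_zero_of_gt (T : TabB r) (i : Fin r) {x : ℕ} (hx : 2 * r + 1 - i < x) :
    ellB r T i x = 0 :=
  List.count_eq_zero.mpr fun h => by have := T.row_bound i x h; omega

lemma TabB.eq_of_xiValB_eq {T T' : TabB r}
    (h : ∀ p ∈ rootIdxB r, xiValB r T p = xiValB r T' p) : T = T' := by
  refine TabB.eq_of_ellB_eq fun i x hx => ?_
  have hi := i.2
  have hbar := h (i, 2 * r + 1 - i) (mk_mem_rootIdxB.mpr (by omega))
  rw [xiValB_of_eq, xiValB_of_eq] at hbar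
  have hzero : ellB r T i (r + 1) ≤ 1 := T.zero_once i
  have hzero' : ellB r T' i (r + 1) ≤ 1 := T'.zero_once i
  by_cases hx0 : x = r + 1 ∨ x = 2 * r + 1 - i
  · rcases hx0 with rfl | rfl <;> omega
  by_cases hxr : 2 * r + 1 - i < x
  · rw [ellB_eq_zero_of_gt T i hxr, ellB_eq_zero_of_gt T' i hxr]
  have := h (i, x) (mk_mem_rootIdxB.mpr (by omega))
  rwa [xiValB_of_ne T (by omega), xiValB_of_ne T' (by omega)] at this

/-- The value at `(i, ī)` is split as `2 ℓ_{i,ī} + ℓ_{i,0}` by division with remainder. -/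
lemma exists_xiValB_eq (F : Fin r × ℕ → ℕ) :
    ∃ T : TabB r, ∀ p ∈ rootIdxB r, xiValB r T p = F p := by
  let g : Fin r → ℕ → ℕ := fun i x =>
    if x = r + 1 then F (i, 2 * r + 1 - i) % 2
    else if x = 2 * r + 1 - i then F (i, x) / 2 else F (i, x)
  have hg : ∀ i, g i (r + 1) ≤ 1 := fun i => by
    simp only [g, if_pos rfl]; omega
  refine ⟨TabB.ofCounts g hg, fun ⟨i, x⟩ hp => ?_⟩
  rw [mk_mem_rootIdxB] at hp
  have hi := i.2
  by_cases hbar : x = 2 * r + 1 - i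
  · subst hbar
    rw [xiValB_of_eq, TabB.ellB_ofCounts g hg i (by omega) le_rfl,
      TabB.ellB_ofCounts g hg i (by omega) (by omega)]
    simp only [g, if_neg hp.2.2, if_pos rfl]
    exact Nat.div_add_mod _ 2
  · rw [xiValB_of_ne _ hbar, TabB.ellB_ofCounts g hg i hp.1 hp.2.1]
    simp only [g, if_neg hp.2.2, if_neg hbar]

lemma rootB_mem_posRootsB {p : Fin r × ℕ} (hp : p ∈ rootIdxB r) :
    rootB r p ∈ posRootsB r :=
  posRootsB_eq_image (r := r) ▸ Finset.mem_image_of_mem _ hp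

theorem XiB_bijective :
    Function.Bijective fun (T : TabB r) (α : {v // v ∈ posRootsB r}) => XiB r T α.1 := by
  constructor
  · intro T T' h
    refine TabB.eq_of_xiValB_eq fun p hp => ?_
    rw [← XiB_rootB T hp, ← XiB_rootB T' hp]
    exact congrFun h ⟨rootB r p, rootB_mem_posRootsB hp⟩
  · intro f
    obtain ⟨T, hT⟩ := exists_xiValB_eq fun p =>
      if h : rootB r p ∈ posRootsB r then f ⟨rootB r p, h⟩ else 0
    refine ⟨T, funext fun ⟨v, hv⟩ => ?_⟩
    obtain ⟨p, hp, rfl⟩ := Finset.mem_image.mp (posRootsB_eq_image (r := r) ▸ hv)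
    simp only [XiB_rootB T hp, hT p hp, dif_pos hv]

end Bijection

section Segments

variable {r : ℕ}

lemma card_filter_ellB_ne_zero (T : TabB r) (i : Fin r) :
    ((Finset.Icc (i.1 + 2) (2 * r + 1)).filter fun x => ellB r T i x ≠ 0).card =
      ((rowLettersB r i).filter fun x => xiValB r T (i, x) ≠ 0).card +
        if ellB r T i (r + 1) ≠ 0 ∧ ellB r T i (2 * r + 1 - i) ≠ 0 then 1 else 0 := by
  have hi := i.2
  have hzero : r + 1 ∉ rowLettersB r i := by simp [mem_rowLettersB]
  have hbar : 2 * r + 1 - i ∈ rowLettersB r i := mem_rowLettersB.mpr (by omega)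
  have hrow : ∑ x ∈ Finset.Icc (i.1 + 2) (2 * r + 1), (if ellB r T i x ≠ 0 then 1 else 0) =
      ∑ x ∈ insert (r + 1) (rowLettersB r i), if ellB r T i x ≠ 0 then 1 else 0 := by
    refine (Finset.sum_subset (fun x hx => ?_) fun x hx hx' => ?_).symm
    · rw [Finset.mem_insert, mem_rowLettersB] at hx
      rw [Finset.mem_Icc]; omega
    · rw [Finset.mem_Icc] at hx
      rw [Finset.mem_insert, mem_rowLettersB] at hx'
      rw [ellB_eq_zero_of_gt T i (by omega), if_neg (not_not_intro rfl)]
  have herase : ∀ x ∈ (rowLettersB r i).erase (2 * r + 1 - i),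
      (if xiValB r T (i, x) ≠ 0 then 1 else 0) = if ellB r T i x ≠ 0 then 1 else 0 :=
    fun x hx => by rw [xiValB_of_ne T (Finset.ne_of_mem_erase hx)]
  rw [Finset.card_filter, Finset.card_filter, hrow, Finset.sum_insert hzero,
    ← Finset.add_sum_erase _ _ hbar, ← Finset.add_sum_erase _ _ hbar,
    Finset.sum_congr rfl herase, xiValB_of_eq]
  split_ifs <;> omega

lemma segB'_eq (T : TabB r) :
    segB' r T = ((rootIdxB r).filter fun p => xiValB r T p ≠ 0).card + eB r T := by
  rw [segB', eB, Finset.card_filter, Finset.card_filter, sum_rootIdxB, ← Finset.sum_add_distrib]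
  refine Finset.sum_congr rfl fun i _ => ?_
  rw [card_filter_ellB_ne_zero, Finset.card_filter]

lemma card_filter_XiB_ne_zero (T : TabB r) :
    ((posRootsB r).filter fun v => XiB r T v ≠ 0).card =
      ((rootIdxB r).filter fun p => xiValB r T p ≠ 0).card := by
  rw [posRootsB_eq_image, Finset.filter_image,
    Finset.card_image_of_injOn (rootB_injOn.mono (Finset.filter_subset _ _))]
  exact congrArg Finset.card (Finset.filter_congr fun p hp => by rw [XiB_rootB T hp])

theorem segB_eq_card (T : TabB r) :
    segB r T = ((posRootsB r).filter fun v => XiB r T v ≠ 0).card := by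
  rw [segB, segB'_eq, card_filter_XiB_ne_zero, Nat.add_sub_cancel]

end Segments

theorem stmt3_general (r : ℕ) :
    Function.Bijective
      (fun (T : TabB r) (α : {v // v ∈ posRootsB r}) => XiB r T α.1) ∧
    (∀ T : TabB r,
      segB r T = ((posRootsB r).filter fun v => XiB r T v ≠ 0).card) :=
  ⟨XiB_bijective, segB_eq_card⟩

/-- `Ξ` is a bijection from `𝒯(∞)` of type `B_r` onto the set of
all functions from the positive roots of `B_r` to `ℕ`; moreover
`seg(T) = seg′(T) - e_B(T)` equals the number of positive roots where `Ξ(T)`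
is nonzero. -/
theorem stmt3 (r : ℕ) (hr : 2 ≤ r) :
    Function.Bijective
      (fun (T : TabB r) (α : {v // v ∈ posRootsB r}) => XiB r T α.1) ∧
    (∀ T : TabB r,
      segB r T = ((posRootsB r).filter fun v => XiB r T v ≠ 0).card) :=
  stmt3_general r
end

section
/- The map Ξ is a bijection from 𝒯(∞) onto the set of all functions from the positive roots {β_{i,k} : 1 ≤ i ≤ k ≤ r−1} ∪ {γ_{i,k} : 1 ≤ i ≤ k ≤ r} of C_r to the nonnegative integers. Moreover, for every T ∈ 𝒯(∞), seg(T) equals the number of positive roots α with Ξ(T)(α) ≠ 0. -/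
/-- Marginally large semistandard Young tableaux of type `C_r`, on the totally
ordered alphabet `{1 ≺ ⋯ ≺ r ≺ r̄ ≺ ⋯ ≺ 1̄}`, encoded by the order isomorphism
onto `{1, …, 2r} ⊂ ℕ` sending `k ↦ k` and `k̄ ↦ 2r+1-k`. Conditions: exactly
`r` rows, rows weakly increasing, columns strictly increasing, first column
`1, …, r`, every entry of row `i` is `≼ ī`, and the number of `i`-entries in
row `i` exceeds the number of boxes in row `i+1` by exactly one. -/
structure TabC (r : ℕ) where
  row : Fin r → List ℕ
  entry_mem : ∀ i : Fin r, ∀ e ∈ row i, 1 ≤ e ∧ e ≤ 2 * r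
  row_weak : ∀ i : Fin r, (row i).Chain' (· ≤ ·)
  first_col : ∀ i : Fin r, (row i).head? = some (i.1 + 1)
  row_bound : ∀ i : Fin r, ∀ e ∈ row i, e ≤ 2 * r - i.1
  col_le : ∀ i : Fin r, ∀ h : i.1 + 1 < r,
    (row ⟨i.1 + 1, h⟩).length ≤ (row i).length
  col_strict : ∀ i : Fin r, ∀ h : i.1 + 1 < r, ∀ j < (row ⟨i.1 + 1, h⟩).length,
    (row i).getD j 0 < (row ⟨i.1 + 1, h⟩).getD j 0
  marg_large : ∀ i : Fin r, (row i).count (i.1 + 1) =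
    (if h : i.1 + 1 < r then (row ⟨i.1 + 1, h⟩).length else 0) + 1

/-- `ℓ_{i,x}(T)`: the number of entries with code `x` in row `i` (row `i : Fin r`
has label `i+1`; the symbol `k̄` has code `2r+1-k`). -/
def ellC (r : ℕ) (T : TabC r) (i : Fin r) (x : ℕ) : ℕ := (T.row i).count x

/-- `seg(T)`: the number of pairs `(i,x)` with `x ≻ i` and `ℓ_{i,x}(T) > 0`. -/
def segC (r : ℕ) (T : TabC r) : ℕ :=
  ∑ i : Fin r, ((Finset.Icc (i.1 + 2) (2 * r)).filter fun x => ellC r T i x ≠ 0).card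

/-- The positive root `β_{i,k} = α_i + ⋯ + α_k` of `C_r` (`1 ≤ i ≤ k ≤ r-1`),
in simple-root coordinates. -/
def betaC (r : ℕ) (i k : ℕ) : Fin r → ℕ :=
  fun j => if i ≤ j.1 + 1 ∧ j.1 + 1 ≤ k then 1 else 0

/-- The positive root
`γ_{i,k} = α_i + ⋯ + α_{r-1} + α_r + α_{r-1} + ⋯ + α_k` of `C_r`
(`1 ≤ i ≤ k ≤ r`), in simple-root coordinates. -/
def gammaC (r : ℕ) (i k : ℕ) : Fin r → ℕ :=
  fun j => if j.1 + 1 = r then 1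
    else if i ≤ j.1 + 1 ∧ j.1 + 1 ≤ k - 1 then 1
    else if k ≤ j.1 + 1 then 2 else 0

/-- The set of positive roots of `C_r`. -/
def posRootsC (r : ℕ) : Finset (Fin r → ℕ) :=
  ((Finset.Icc 1 (r - 1) ×ˢ Finset.Icc 1 (r - 1)).filter fun p => p.1 ≤ p.2).image
      (fun p => betaC r p.1 p.2) ∪
    ((Finset.Icc 1 r ×ˢ Finset.Icc 1 r).filter fun p => p.1 ≤ p.2).image
      (fun p => gammaC r p.1 p.2)

/-- `Ξ(T)`, extended by zero to all vectors: `Ξ(T)(β_{i,k-1}) = ℓ_{i,k}(T)` for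
`i < k ≤ r` and `Ξ(T)(γ_{i,k}) = ℓ_{i,k̄}(T)` for `i ≤ k ≤ r`. -/
def XiC (r : ℕ) (T : TabC r) (v : Fin r → ℕ) : ℕ :=
  ∑ i : Fin r,
    ((∑ k ∈ Finset.Icc (i.1 + 2) r,
        if v = betaC r (i.1 + 1) (k - 1) then ellC r T i k else 0) +
      (∑ k ∈ Finset.Icc (i.1 + 1) r,
        if v = gammaC r (i.1 + 1) k then ellC r T i (2 * r + 1 - k) else 0))

/-- `-wt(T) = Σ_α Ξ(T)(α)·α`, in simple-root coordinates. -/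
def negwtC (r : ℕ) (T : TabC r) : Fin r → ℕ :=
  ∑ v ∈ posRootsC r, XiC r T v • v

/-!
Every positive root is attached to exactly one position `(i, x)` with `i ≺ x ≼ ī`: the root
`β_{i,k-1}` to `x = k` and `γ_{i,k}` to `x = k̄`; at that root `Ξ(T)` records `ℓ_{i,x}(T)`.
A marginally large tableau is determined by these numbers, bottom row first: its rows are
sorted, and the number of labels `i` in row `i` is forced by the length of row `i + 1`.
Conversely, building the rows bottom-up in the same way realises any family of numbers. Since
positions correspond bijectively to positive roots, the nonzero values of `Ξ(T)` are counted by
`seg(T)`.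
-/

open Finset

/-- The positive root at which `Ξ(T)` records the number of entries `x` in row `i`. -/
def rootC (r : ℕ) (i : Fin r) (x : ℕ) : Fin r → ℕ :=
  if x ≤ r then betaC r (i.1 + 1) (x - 1) else gammaC r (i.1 + 1) (2 * r + 1 - x)

/-- The entries `x` other than its label `i + 1` that row `i` may hold (codes as in `TabC`). -/
def entriesC (r : ℕ) : Finset (Fin r × ℕ) :=
  (univ ×ˢ range (2 * r + 1)).filter fun p => p.1.1 + 1 < p.2 ∧ p.2 ≤ 2 * r - p.1

lemma mem_entriesC {r : ℕ} {p : Fin r × ℕ} :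
    p ∈ entriesC r ↔ p.1.1 + 1 < p.2 ∧ p.2 ≤ 2 * r - p.1 := by
  simp only [entriesC, mem_filter, mem_product, mem_univ, mem_range, true_and]
  omega

lemma sum_entriesC {M : Type*} [AddCommMonoid M] (r : ℕ) (f : Fin r × ℕ → M) :
    ∑ p ∈ entriesC r, f p = ∑ i : Fin r, ∑ x ∈ Ioc (i.1 + 1) (2 * r - i), f (i, x) :=
  sum_finset_product _ _ _ fun p => by simp [mem_entriesC]

lemma rootC_apply {r : ℕ} (i : Fin r) {x : ℕ} (hx : x ≤ 2 * r - i) (j : Fin r) :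
    rootC r i x j =
      if x ≤ r then (if i.1 ≤ j ∧ j.1 + 2 ≤ x then 1 else 0)
      else if j.1 + 1 = r then 1
      else if i.1 ≤ j then (if j.1 + 1 + x ≤ 2 * r then 1 else 2) else 0 := by
  have := j.2
  unfold rootC
  split_ifs <;> simp only [betaC, gammaC] <;> split_ifs <;> omega

lemma rootC_ne_of_row_lt {r : ℕ} {i i' : Fin r} {x x' : ℕ} (hx : i.1 + 1 < x ∧ x ≤ 2 * r - i)
    (hx' : x' ≤ 2 * r - i') (hii' : i < i') : rootC r i x ≠ rootC r i' x' := by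
  intro h
  have hi := congrFun h i
  rw [rootC_apply i hx.2, rootC_apply i' hx'] at hi
  have := i'.2
  split_ifs at hi <;> omega

lemma rootC_ne_of_lt {r : ℕ} {i : Fin r} {x x' : ℕ} (hx : i.1 + 1 < x) (hx' : x' ≤ 2 * r - i)
    (hxx' : x < x') : rootC r i x ≠ rootC r i x' := by
  intro h
  -- a coordinate where the two roots differ
  let j : Fin r := ⟨if x' ≤ r then x - 1 else if x ≤ r then r - 1 else 2 * r - x', by
    have := i.2; split_ifs <;> omega⟩
  have hj := congrFun h j
  rw [rootC_apply i (by omega), rootC_apply i hx'] at hj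
  simp only [j] at hj
  split_ifs at hj <;> omega

lemma rootC_injOn (r : ℕ) :
    Set.InjOn (fun p : Fin r × ℕ => rootC r p.1 p.2) (entriesC r) := by
  rintro ⟨i, x⟩ hp ⟨i', x'⟩ hp' h
  simp only [mem_coe, mem_entriesC] at hp hp' h
  obtain hii' | rfl | hii' := lt_trichotomy i i'
  · exact absurd h (rootC_ne_of_row_lt hp hp'.2 hii')
  · obtain hxx' | rfl | hxx' := lt_trichotomy x x'
    · exact absurd h (rootC_ne_of_lt hp.1 hp'.2 hxx')
    · rfl
    · exact absurd h.symm (rootC_ne_of_lt hp'.1 hp.2 hxx')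
  · exact absurd h.symm (rootC_ne_of_row_lt hp' hp.2 hii')

lemma posRootsC_eq_image (r : ℕ) :
    posRootsC r = (entriesC r).image fun p => rootC r p.1 p.2 := by
  ext v
  simp only [posRootsC, mem_union, mem_image, mem_filter, mem_product, mem_Icc, Prod.exists,
    mem_entriesC]
  constructor
  · rintro (⟨k, l, ⟨⟨⟨hk, -⟩, -, hl⟩, hkl⟩, rfl⟩ | ⟨k, l, ⟨⟨⟨hk, -⟩, -, hl⟩, hkl⟩, rfl⟩)
    · refine ⟨⟨k - 1, by omega⟩, l + 1, ⟨by simp only; omega, by simp only; omega⟩, ?_⟩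
      simp only [rootC, if_pos (show l + 1 ≤ r by omega), Nat.sub_add_cancel hk,
        Nat.add_sub_cancel]
    · refine ⟨⟨k - 1, by omega⟩, 2 * r + 1 - l, ⟨by simp only; omega, by simp only; omega⟩, ?_⟩
      simp only [rootC, if_neg (show ¬ 2 * r + 1 - l ≤ r by omega), Nat.sub_add_cancel hk,
        Nat.sub_sub_self (show l ≤ 2 * r + 1 by omega)]
  · rintro ⟨i, x, ⟨hix, hxi⟩, rfl⟩
    have := i.2
    by_cases hxr : x ≤ r
    · exact Or.inl ⟨i + 1, x - 1, ⟨⟨⟨by omega, by omega⟩, by omega, by omega⟩, by omega⟩,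
        by rw [rootC, if_pos hxr]⟩
    · exact Or.inr ⟨i + 1, 2 * r + 1 - x, ⟨⟨⟨by omega, by omega⟩, by omega, by omega⟩, by omega⟩,
        by rw [rootC, if_neg hxr]⟩

lemma rootC_mem_posRootsC {r : ℕ} {p : Fin r × ℕ} (hp : p ∈ entriesC r) :
    rootC r p.1 p.2 ∈ posRootsC r :=
  posRootsC_eq_image r ▸ mem_image_of_mem _ hp

lemma XiC_eq_sum_entriesC {r : ℕ} (T : TabC r) (v : Fin r → ℕ) :
    XiC r T v = ∑ p ∈ entriesC r, if v = rootC r p.1 p.2 then ellC r T p.1 p.2 else 0 := by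
  rw [sum_entriesC]
  refine sum_congr rfl fun i _ => ?_
  have := i.2
  rw [← sum_Ioc_consecutive _ (show i.1 + 1 ≤ r by omega) (show r ≤ 2 * r - i by omega)]
  congr 1
  · rw [← Icc_add_one_left_eq_Ioc]
    refine sum_congr rfl fun x hx => ?_
    rw [rootC, if_pos (mem_Icc.1 hx).2]
  · refine sum_nbij' (fun k => 2 * r + 1 - k) (fun x => 2 * r + 1 - x) ?_ ?_ ?_ ?_ ?_ <;>
      intro k hk <;> simp only [mem_Icc, mem_Ioc] at hk
    · simp only [mem_Ioc]; omega
    · simp only [mem_Icc]; omega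
    · omega
    · omega
    · rw [rootC, if_neg (show ¬ 2 * r + 1 - k ≤ r by omega),
        Nat.sub_sub_self (show k ≤ 2 * r + 1 by omega)]

lemma XiC_rootC {r : ℕ} (T : TabC r) {p : Fin r × ℕ} (hp : p ∈ entriesC r) :
    XiC r T (rootC r p.1 p.2) = ellC r T p.1 p.2 := by
  rw [XiC_eq_sum_entriesC, sum_eq_single_of_mem p hp fun q hq hqp =>
    if_neg fun h => hqp (rootC_injOn r hq hp h.symm), if_pos rfl]

namespace TabC

variable {r : ℕ}

lemma ext_row {T T' : TabC r} (h : T.row = T'.row) : T = T' := by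
  cases T; cases T'; cases h; rfl

lemma mem_row_Icc (T : TabC r) (i : Fin r) {e : ℕ} (he : e ∈ T.row i) :
    e ∈ Icc (i.1 + 1) (2 * r - i) := by
  refine mem_Icc.2 ⟨?_, T.row_bound i e he⟩
  obtain ⟨t, ht⟩ : ∃ t, T.row i = (i.1 + 1) :: t := by
    have := T.first_col i
    cases hrow : T.row i <;> simp_all
  have hsorted := List.isChain_iff_pairwise.1 (T.row_weak i)
  rw [ht] at he hsorted
  rcases List.mem_cons.1 he with rfl | he
  · rfl
  · exact List.rel_of_pairwise_cons hsorted he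

lemma ellC_eq_zero_of_notMem (T : TabC r) (i : Fin r) {x : ℕ} (hx : x ∉ Icc (i.1 + 1) (2 * r - i)) :
    ellC r T i x = 0 :=
  List.count_eq_zero.2 fun h => hx (T.mem_row_Icc i h)

lemma row_eq_of_ellC_eq {T T' : TabC r}
    (h : ∀ p ∈ entriesC r, ellC r T p.1 p.2 = ellC r T' p.1 p.2) (i : Fin r) :
    T.row i = T'.row i := by
  refine (List.perm_iff_count.2 fun x => ?_).eq_of_pairwise'
    (List.isChain_iff_pairwise.1 (T.row_weak i)) (List.isChain_iff_pairwise.1 (T'.row_weak i))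
  by_cases hx : x = i.1 + 1
  · -- the number of labels `i + 1` is fixed by the length of the next row
    subst hx
    rw [T.marg_large, T'.marg_large]
    split_ifs with hi
    · rw [row_eq_of_ellC_eq h ⟨i.1 + 1, hi⟩]
    · rfl
  by_cases hmem : x ∈ Icc (i.1 + 1) (2 * r - i)
  · exact h (i, x) (mem_entriesC.2 (by dsimp only; simp only [mem_Icc] at hmem; omega))
  · exact (T.ellC_eq_zero_of_notMem i hmem).trans (T'.ellC_eq_zero_of_notMem i hmem).symm
termination_by r - i

lemma ext_of_ellC {T T' : TabC r}
    (h : ∀ p ∈ entriesC r, ellC r T p.1 p.2 = ellC r T' p.1 p.2) : T = T' :=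
  ext_row (funext (row_eq_of_ellC_eq h))

end TabC

def blockList (g : ℕ → ℕ) (a n : ℕ) : List ℕ :=
  (List.range' a n).flatMap fun x => List.replicate (g x) x

lemma mem_blockList {g : ℕ → ℕ} {a n x : ℕ} (h : x ∈ blockList g a n) : a ≤ x ∧ x < a + n := by
  simp only [blockList, List.mem_flatMap, List.mem_range'_1, List.mem_replicate] at h
  omega

lemma pairwise_blockList (g : ℕ → ℕ) (a n : ℕ) : (blockList g a n).Pairwise (· ≤ ·) := by
  refine List.pairwise_flatMap.2 ⟨fun x _ => List.pairwise_replicate.2 (.inr le_rfl), ?_⟩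
  refine (List.pairwise_lt_range' (s := a) (n := n)).imp fun hxy u hu v hv => ?_
  rw [List.eq_of_mem_replicate hu, List.eq_of_mem_replicate hv]
  exact hxy.le

lemma count_blockList (g : ℕ → ℕ) (a n x : ℕ) :
    (blockList g a n).count x = if a ≤ x ∧ x < a + n then g x else 0 := by
  induction n generalizing a with
  | zero => simp [blockList]
  | succ n ih =>
    rw [blockList, List.range'_succ, List.flatMap_cons, List.count_append, ← blockList, ih,
      List.count_replicate]
    by_cases hxa : x = a
    · subst hxa; simp
    · simp only [beq_iff_eq, Ne.symm hxa, if_false]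
      split_ifs <;> omega

/-- Row `i` of the marginally large tableau with `f i x` entries `x` for `i + 1 ≺ x`. -/
def rowOfCounts (r : ℕ) (f : Fin r → ℕ → ℕ) (i : ℕ) : List ℕ :=
  if h : i < r then
    List.replicate ((rowOfCounts r f (i + 1)).length + 1) (i + 1) ++
      blockList (f ⟨i, h⟩) (i + 2) (2 * r - 2 * i - 1)
  else []
termination_by r - i

section rowOfCounts

variable {r : ℕ} (f : Fin r → ℕ → ℕ)

lemma rowOfCounts_of_lt {i : ℕ} (h : i < r) :
    rowOfCounts r f i = List.replicate ((rowOfCounts r f (i + 1)).length + 1) (i + 1) ++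
      blockList (f ⟨i, h⟩) (i + 2) (2 * r - 2 * i - 1) := by
  rw [rowOfCounts, dif_pos h]

lemma rowOfCounts_of_le {i : ℕ} (h : r ≤ i) : rowOfCounts r f i = [] := by
  rw [rowOfCounts, dif_neg (by omega)]

lemma mem_rowOfCounts {i e : ℕ} (h : i < r) (he : e ∈ rowOfCounts r f i) :
    i + 1 ≤ e ∧ e ≤ 2 * r - i := by
  rw [rowOfCounts_of_lt f h, List.mem_append] at he
  rcases he with he | he
  · rw [List.eq_of_mem_replicate he]; omega
  · have := mem_blockList he; omega

lemma pairwise_rowOfCounts (i : ℕ) : (rowOfCounts r f i).Pairwise (· ≤ ·) := by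
  by_cases h : i < r
  · rw [rowOfCounts_of_lt f h, List.pairwise_append]
    refine ⟨List.pairwise_replicate.2 (.inr le_rfl), pairwise_blockList _ _ _, fun x hx y hy => ?_⟩
    rw [List.eq_of_mem_replicate hx]
    exact (mem_blockList hy).1.trans' (Nat.le_succ _)
  · rw [rowOfCounts_of_le f (by omega)]
    exact List.Pairwise.nil

lemma count_rowOfCounts_self (i : Fin r) :
    (rowOfCounts r f i).count (i.1 + 1) = (rowOfCounts r f (i.1 + 1)).length + 1 := by
  rw [rowOfCounts_of_lt f i.2, List.count_append, List.count_replicate_self, count_blockList,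
    if_neg (by omega), add_zero]

lemma count_rowOfCounts {i : Fin r} {x : ℕ} (hx : i.1 + 1 < x ∧ x ≤ 2 * r - i) :
    (rowOfCounts r f i).count x = f i x := by
  have := i.2
  rw [rowOfCounts_of_lt f i.2, List.count_append, List.count_replicate, count_blockList,
    if_pos (show i.1 + 2 ≤ x ∧ x < i.1 + 2 + (2 * r - 2 * i - 1) by omega)]
  simp only [beq_iff_eq, show i.1 + 1 ≠ x by omega, if_false, zero_add]

lemma getD_rowOfCounts {i j : ℕ} (h : i < r) (hj : j < (rowOfCounts r f (i + 1)).length + 1) :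
    (rowOfCounts r f i).getD j 0 = i + 1 := by
  rw [rowOfCounts_of_lt f h, List.getD_append _ _ _ _ (by simpa using hj),
    List.getD_eq_getElem _ _ (by simpa using hj), List.getElem_replicate]

end rowOfCounts

def TabC.ofCounts (r : ℕ) (f : Fin r → ℕ → ℕ) : TabC r where
  row i := rowOfCounts r f i
  entry_mem i e he := by
    have := mem_rowOfCounts f i.2 he
    omega
  row_weak i := List.isChain_iff_pairwise.2 (pairwise_rowOfCounts f i)
  first_col i := by
    rw [rowOfCounts_of_lt f i.2, List.replicate_succ]
    rfl
  row_bound i e he := (mem_rowOfCounts f i.2 he).2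
  col_le i h := by
    show (rowOfCounts r f (i.1 + 1)).length ≤ (rowOfCounts r f i).length
    rw [rowOfCounts_of_lt f i.2, List.length_append, List.length_replicate]
    omega
  col_strict i h j hj := by
    rw [getD_rowOfCounts f i.2 (by simp only at hj; omega),
      List.getD_eq_getElem _ _ hj]
    exact (mem_rowOfCounts f h (List.getElem_mem _)).1
  marg_large i := by
    rw [count_rowOfCounts_self]
    split_ifs with h
    · rfl
    · rw [rowOfCounts_of_le f (by omega), List.length_nil]

lemma TabC.ellC_ofCounts {r : ℕ} (f : Fin r → ℕ → ℕ) {p : Fin r × ℕ} (hp : p ∈ entriesC r) :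
    ellC r (TabC.ofCounts r f) p.1 p.2 = f p.1 p.2 :=
  count_rowOfCounts f (mem_entriesC.1 hp)

lemma segC_eq_card {r : ℕ} (T : TabC r) :
    segC r T = #{v ∈ posRootsC r | XiC r T v ≠ 0} := calc
  segC r T =
      ∑ i : Fin r, ∑ x ∈ Ioc (i.1 + 1) (2 * r - i), if ellC r T i x ≠ 0 then 1 else 0 := by
    refine sum_congr rfl fun i _ => ?_
    rw [card_filter, ← Icc_add_one_left_eq_Ioc]
    refine (sum_subset (Icc_subset_Icc_right (by omega)) fun x hx hx' => ?_).symm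
    rw [T.ellC_eq_zero_of_notMem i (by simp only [mem_Icc] at hx hx' ⊢; omega), if_neg (by simp)]
  _ = #{p ∈ entriesC r | ellC r T p.1 p.2 ≠ 0} := by rw [card_filter, sum_entriesC]
  _ = #{v ∈ posRootsC r | XiC r T v ≠ 0} := by
    rw [posRootsC_eq_image, filter_image,
      card_image_of_injOn ((rootC_injOn r).mono (filter_subset _ _))]
    exact congrArg card (filter_congr fun p hp => by rw [XiC_rootC T hp])

theorem stmt5_general (r : ℕ) :
    Function.Bijective
      (fun (T : TabC r) (α : {v // v ∈ posRootsC r}) => XiC r T α.1) ∧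
    (∀ T : TabC r,
      segC r T = ((posRootsC r).filter fun v => XiC r T v ≠ 0).card) := by
  refine ⟨⟨fun T T' h => TabC.ext_of_ellC fun p hp => ?_, fun g => ?_⟩, segC_eq_card⟩
  · simpa only [XiC_rootC _ hp] using congrFun h ⟨_, rootC_mem_posRootsC hp⟩
  · refine ⟨TabC.ofCounts r fun i x =>
      if h : (i, x) ∈ entriesC r then g ⟨_, rootC_mem_posRootsC h⟩ else 0, ?_⟩
    funext ⟨v, hv⟩
    obtain ⟨p, hp, rfl⟩ := mem_image.1 (posRootsC_eq_image r ▸ hv)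
    simp only [XiC_rootC _ hp, TabC.ellC_ofCounts _ hp, dif_pos hp]

/-- `Ξ` is a bijection from `𝒯(∞)` of type `C_r` onto the set of
all functions from the positive roots of `C_r` to `ℕ`; moreover `seg(T)`
equals the number of positive roots where `Ξ(T)` is nonzero. -/
theorem stmt5 (r : ℕ) (hr : 2 ≤ r) :
    Function.Bijective
      (fun (T : TabC r) (α : {v // v ∈ posRootsC r}) => XiC r T α.1) ∧
    (∀ T : TabC r,
      segC r T = ((posRootsC r).filter fun v => XiC r T v ≠ 0).card) :=
  stmt5_general r
end

section
/- The map Ξ is a bijection from 𝒯(∞) onto the set of all functions from the positive roots {β_{i,k} : 1 ≤ i ≤ k ≤ r−1} ∪ {β_{i,r} : 1 ≤ i ≤ r−1} ∪ {γ_{i,k} : 1 ≤ i < k ≤ r−1} of D_r to the nonnegative integers; its inverse recovers the segment data from a function with values c_{i,k} at β_{i,k} and d_{i,k} at γ_{i,k} via ℓ_{i,k+1} = c_{i,k} for k ≤ r−2, ℓ_{i,r} = max(0, c_{i,r−1} − c_{i,r}), ℓ_{i,r̄} = max(0, c_{i,r} − c_{i,r−1}), ℓ_{i,ī} = min(c_{i,r−1},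 c_{i,r}), and ℓ_{i,k̄} = d_{i,k}. Moreover, for every T ∈ 𝒯(∞), seg(T) = seg′(T) + e_D(T) equals the number of positive roots α with Ξ(T)(α) ≠ 0. -/
/-- The strict order on the type `D_r` alphabet
`{1 ≺ ⋯ ≺ r-1 ≺ r, r̄ ≺ \overline{r-1} ≺ ⋯ ≺ 1̄}`, encoded in `{1, …, 2r} ⊂ ℕ`
by `k ↦ k` for `k ≤ r`, `r̄ ↦ r+1`, and `k̄ ↦ 2r+1-k` for `k ≤ r-1`; the
symbols `r` and `r̄` (codes `r` and `r+1`) are incomparable. -/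
def dltD (r : ℕ) (a b : ℕ) : Prop := a < b ∧ ¬(a = r ∧ b = r + 1)

/-- The weak order on the type `D_r` alphabet. -/
def dleD (r : ℕ) (a b : ℕ) : Prop := a = b ∨ dltD r a b

/-- Marginally large semistandard Young tableaux of type `D_r`, on the
partially ordered alphabet above. Conditions: exactly `r-1` rows, rows weakly
increasing, columns strictly increasing, first column `1, …, r-1`, every entry
of row `i` is `≼ ī`, the symbols `r` and `r̄` never appear in the same row, and
the number of `i`-entries in row `i` exceeds the number of boxes in row `i+1`
by exactly one. -/
structure TabD (r : ℕ) where
  row : Fin (r - 1) → List ℕ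
  entry_mem : ∀ i : Fin (r - 1), ∀ e ∈ row i, 1 ≤ e ∧ e ≤ 2 * r
  row_weak : ∀ i : Fin (r - 1), (row i).Chain' (dleD r)
  first_col : ∀ i : Fin (r - 1), (row i).head? = some (i.1 + 1)
  row_bound : ∀ i : Fin (r - 1), ∀ e ∈ row i, dleD r e (2 * r - i.1)
  not_both : ∀ i : Fin (r - 1), ¬(r ∈ row i ∧ (r + 1) ∈ row i)
  col_le : ∀ i : Fin (r - 1), ∀ h : i.1 + 1 < r - 1,
    (row ⟨i.1 + 1, h⟩).length ≤ (row i).length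
  col_strict : ∀ i : Fin (r - 1), ∀ h : i.1 + 1 < r - 1,
    ∀ j < (row ⟨i.1 + 1, h⟩).length,
      dltD r ((row i).getD j 0) ((row ⟨i.1 + 1, h⟩).getD j 0)
  marg_large : ∀ i : Fin (r - 1), (row i).count (i.1 + 1) =
    (if h : i.1 + 1 < r - 1 then (row ⟨i.1 + 1, h⟩).length else 0) + 1

/-- `ℓ_{i,x}(T)`: the number of entries with code `x` in row `i` (row
`i : Fin (r-1)` has label `i+1`; `r̄` has code `r+1` and `k̄` has code `2r+1-k`
for `k ≤ r-1`). -/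
def ellD (r : ℕ) (T : TabD r) (i : Fin (r - 1)) (x : ℕ) : ℕ := (T.row i).count x

/-- `seg′(T)`: the number of pairs `(i,x)` with `x ≻ i` and `ℓ_{i,x}(T) > 0`. -/
def segD' (r : ℕ) (T : TabD r) : ℕ :=
  ∑ i : Fin (r - 1),
    ((Finset.Icc (i.1 + 2) (2 * r)).filter fun x => ellD r T i x ≠ 0).card

/-- `e_D(T)`: the number of rows `i` containing an `ī`-segment but neither an
`r`- nor an `r̄`-segment. -/
def eD (r : ℕ) (T : TabD r) : ℕ :=
  (Finset.univ.filter fun i : Fin (r - 1) =>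
    ellD r T i (2 * r - i.1) ≠ 0 ∧ ellD r T i r = 0 ∧ ellD r T i (r + 1) = 0).card

/-- `seg(T) = seg′(T) + e_D(T)`. -/
def segD (r : ℕ) (T : TabD r) : ℕ := segD' r T + eD r T

/-- The positive root `β_{i,k} = α_i + ⋯ + α_k` of `D_r` (`1 ≤ i ≤ k ≤ r-1`),
in simple-root coordinates. -/
def betaD (r : ℕ) (i k : ℕ) : Fin r → ℕ :=
  fun j => if i ≤ j.1 + 1 ∧ j.1 + 1 ≤ k then 1 else 0

/-- The positive root `β_{i,r} = α_i + ⋯ + α_{r-2} + α_r` of `D_r`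
(`1 ≤ i ≤ r-1`), in simple-root coordinates. -/
def betaDr (r : ℕ) (i : ℕ) : Fin r → ℕ :=
  fun j => if i ≤ j.1 + 1 ∧ j.1 + 1 ≤ r - 2 then 1 else if j.1 + 1 = r then 1 else 0

/-- The positive root
`γ_{i,k} = α_i + ⋯ + α_{r-1} + α_r + α_{r-2} + ⋯ + α_k` of `D_r`
(`1 ≤ i < k ≤ r-1`), in simple-root coordinates. -/
def gammaD (r : ℕ) (i k : ℕ) : Fin r → ℕ :=
  fun j => if i ≤ j.1 + 1 ∧ j.1 + 1 ≤ k - 1 then 1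
    else if k ≤ j.1 + 1 ∧ j.1 + 1 ≤ r - 2 then 2
    else if j.1 + 1 = r - 1 ∨ j.1 + 1 = r then 1 else 0

/-- The set of positive roots of `D_r`. -/
def posRootsD (r : ℕ) : Finset (Fin r → ℕ) :=
  ((Finset.Icc 1 (r - 1) ×ˢ Finset.Icc 1 (r - 1)).filter fun p => p.1 ≤ p.2).image
      (fun p => betaD r p.1 p.2) ∪
    (Finset.Icc 1 (r - 1)).image (fun i => betaDr r i) ∪
    ((Finset.Icc 1 (r - 1) ×ˢ Finset.Icc 1 (r - 1)).filter fun p => p.1 < p.2).image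
      (fun p => gammaD r p.1 p.2)

/-- `Ξ(T)`, extended by zero to all vectors: `Ξ(T)(β_{i,k-1}) = ℓ_{i,k}(T)` for
`i < k ≤ r-1`, `Ξ(T)(β_{i,r-1}) = ℓ_{i,r}(T) + ℓ_{i,ī}(T)`,
`Ξ(T)(β_{i,r}) = ℓ_{i,r̄}(T) + ℓ_{i,ī}(T)`, and `Ξ(T)(γ_{i,k}) = ℓ_{i,k̄}(T)`
for `i < k ≤ r-1`. -/
def XiD (r : ℕ) (T : TabD r) (v : Fin r → ℕ) : ℕ :=
  ∑ i : Fin (r - 1),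
    ((∑ k ∈ Finset.Icc (i.1 + 2) (r - 1),
        if v = betaD r (i.1 + 1) (k - 1) then ellD r T i k else 0) +
      (if v = betaD r (i.1 + 1) (r - 1) then
        ellD r T i r + ellD r T i (2 * r - i.1) else 0) +
      (if v = betaDr r (i.1 + 1) then
        ellD r T i (r + 1) + ellD r T i (2 * r - i.1) else 0) +
      (∑ k ∈ Finset.Icc (i.1 + 2) (r - 1),
        if v = gammaD r (i.1 + 1) k then ellD r T i (2 * r + 1 - k) else 0))

/-- `-wt(T) = Σ_α Ξ(T)(α)·α`, in simple-root coordinates. -/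
def negwtD (r : ℕ) (T : TabD r) : Fin r → ℕ :=
  ∑ v ∈ posRootsD r, XiD r T v • v

/-!
Row `i` of a marginally large tableau is determined by its segment lengths `ℓ_{i,x}` for
`x ≻ i`: the number of `i`-entries is forced by the length of row `i + 1`. `Ξ` reads these
lengths off as root multiplicities, and since `r` and `r̄` never share a row, `ℓ_{i,r}`, `ℓ_{i,r̄}`
and `ℓ_{i,ī}` are recovered from `Ξ(β_{i,r-1}) = ℓ_{i,r} + ℓ_{i,ī}` and
`Ξ(β_{i,r}) = ℓ_{i,r̄} + ℓ_{i,ī}` as truncated differences and a minimum. Conversely, any root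
multiplicities define segment lengths by these formulas, and filling the rows from the bottom up
produces a tableau; this is the inverse of `Ξ`. Counting row by row, a segment is nonzero exactly
when its root is, except that an `ī`-segment in a row without `r` and `r̄` makes both
`β_{i,r-1}` and `β_{i,r}` nonzero: this is the correction `e_D`.
-/

section BigOperators

variable {M : Type*} [AddCommMonoid M]

theorem Finset.sum_ite_eq_of_injOn {ι α : Type*} [DecidableEq α]
    {s : Finset ι} {ρ : ι → α} (hρ : Set.InjOn ρ s) (w : ι → M) {p : ι} (hp : p ∈ s) {v : α}
    (hv : v = ρ p) : (∑ q ∈ s, if v = ρ q then w q else 0) = w p := by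
  subst hv
  rw [Finset.sum_eq_single_of_mem p hp fun q hq hqp => if_neg fun h => hqp (hρ hq hp h.symm),
    if_pos rfl]

theorem sum_Icc_one_eq_sum_fin (n : ℕ) (F : ℕ → M) :
    ∑ a ∈ Finset.Icc 1 n, F a = ∑ i : Fin n, F (i.1 + 1) := by
  rw [Fin.sum_univ_eq_sum_range (fun i => F (i + 1)), Finset.range_eq_Ico,
    Finset.sum_Ico_add' F, ← Finset.Ico_add_one_right_eq_Icc, zero_add]

theorem sum_Icc_filter_le {n a : ℕ} (ha : 1 ≤ a) (p : ℕ → Prop) [DecidablePred p]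
    (hp : ∀ b, p b ↔ a ≤ b) (F : ℕ → M) :
    ∑ b ∈ (Finset.Icc 1 n).filter p, F b = ∑ b ∈ Finset.Icc a n, F b := by
  congr 1
  ext b
  simp only [Finset.mem_filter, Finset.mem_Icc, hp]
  omega

theorem sum_Icc_consecutive (f : ℕ → M) {a b c : ℕ}
    (hab : a ≤ b + 1) (hbc : b ≤ c) :
    ∑ x ∈ Finset.Icc a c, f x = ∑ x ∈ Finset.Icc a b, f x + ∑ x ∈ Finset.Icc (b + 1) c, f x := by
  simp only [← Finset.Ico_add_one_right_eq_Icc]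
  exact (Finset.sum_Ico_consecutive f hab (by omega)).symm

end BigOperators

section ReplicateRuns

def replicateRuns (f : ℕ → ℕ) (s n : ℕ) : List ℕ :=
  (List.range' s n).flatMap fun y => List.replicate (f y) y

variable (f : ℕ → ℕ)

theorem count_replicateRuns (x : ℕ) :
    ∀ s n, (replicateRuns f s n).count x = if s ≤ x ∧ x < s + n then f x else 0 := by
  intro s n
  induction n generalizing s with
  | zero => simp [replicateRuns]
  | succ m ih =>
    have := ih (s + 1)
    simp only [replicateRuns, List.range'_succ, List.flatMap_cons, List.count_append,
      List.count_replicate, beq_iff_eq] at this ⊢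
    rw [this]
    by_cases hx : x = s
    · subst hx; simp
    · split_ifs <;> omega

theorem length_replicateRuns :
    ∀ s n, (replicateRuns f s n).length = ∑ y ∈ Finset.Ico s (s + n), f y := by
  intro s n
  induction n generalizing s with
  | zero => simp [replicateRuns]
  | succ m ih =>
    have := ih (s + 1)
    simp only [replicateRuns, List.range'_succ, List.flatMap_cons, List.length_append,
      List.length_replicate] at this ⊢
    rw [this, show s + (m + 1) = s + 1 + m by omega,
      Finset.sum_eq_sum_Ico_succ_bot (show s < s + 1 + m by omega)]

theorem mem_replicateRuns {x s n : ℕ} :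
    x ∈ replicateRuns f s n ↔ s ≤ x ∧ x < s + n ∧ 0 < f x := by
  rw [← List.count_pos_iff, count_replicateRuns]
  split_ifs <;> omega

theorem pairwise_le_replicateRuns (s n : ℕ) : (replicateRuns f s n).Pairwise (· ≤ ·) := by
  rw [replicateRuns, List.pairwise_flatMap]
  refine ⟨fun y _ => List.pairwise_replicate.2 (Or.inr le_rfl), ?_⟩
  refine (List.pairwise_lt_range' (s := s) (n := n)).imp fun {a b} hab x hx y hy => ?_
  rw [List.eq_of_mem_replicate hx, List.eq_of_mem_replicate hy]
  exact hab.le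

theorem getD_replicateRuns_of_lt {s n j : ℕ} (hn : 0 < n) (hj : j < f s) :
    (replicateRuns f s n).getD j 0 = s := by
  obtain ⟨m, rfl⟩ : ∃ m, n = m + 1 := ⟨n - 1, by omega⟩
  rw [replicateRuns, List.range'_succ, List.flatMap_cons, List.getD_eq_getElem?_getD,
    List.getElem?_append_left (by simpa using hj)]
  simp [hj]

theorem head?_replicateRuns {s n : ℕ} (hn : 0 < n) (hs : 0 < f s) :
    (replicateRuns f s n).head? = some s := by
  obtain ⟨m, rfl⟩ : ∃ m, n = m + 1 := ⟨n - 1, by omega⟩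
  obtain ⟨c, hc⟩ : ∃ c, f s = c + 1 := ⟨f s - 1, by omega⟩
  simp [replicateRuns, List.range'_succ, hc, List.replicate_succ]

end ReplicateRuns

section Roots

variable {r : ℕ}

theorem betaD_inj {i k i' k' : ℕ} (hi : 1 ≤ i) (hik : i ≤ k) (hk : k ≤ r - 1)
    (hi' : 1 ≤ i') (hik' : i' ≤ k') (hk' : k' ≤ r - 1)
    (h : betaD r i k = betaD r i' k') : i = i' ∧ k = k' := by
  have key : ∀ p, (hp : p < r) → ((i ≤ p + 1 ∧ p + 1 ≤ k) ↔ (i' ≤ p + 1 ∧ p + 1 ≤ k')) := by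
    intro p hp
    have e := congrFun h ⟨p, hp⟩
    simp only [betaD] at e
    split_ifs at e <;> omega
  have := key (i - 1) (by omega)
  have := key (i' - 1) (by omega)
  have := key (k - 1) (by omega)
  have := key (k' - 1) (by omega)
  omega

theorem betaDr_inj {i i' : ℕ} (hi : 1 ≤ i) (hi2 : i ≤ r - 1) (hi' : 1 ≤ i') (hi2' : i' ≤ r - 1)
    (h : betaDr r i = betaDr r i') : i = i' := by
  have e1 := congrFun h ⟨i - 1, by omega⟩
  have e2 := congrFun h ⟨i' - 1, by omega⟩
  simp only [betaDr] at e1 e2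
  split_ifs at e1 e2 <;> omega

theorem gammaD_ne_zero_iff {i k : ℕ} (hik : i < k) (hk : k ≤ r - 1) (p : Fin r) :
    gammaD r i k p ≠ 0 ↔ i ≤ p.1 + 1 := by
  simp only [gammaD]
  split_ifs <;> omega

theorem gammaD_inj {i k i' k' : ℕ} (hi : 1 ≤ i) (hik : i < k) (hk : k ≤ r - 1)
    (hi' : 1 ≤ i') (hik' : i' < k') (hk' : k' ≤ r - 1)
    (h : gammaD r i k = gammaD r i' k') : i = i' ∧ k = k' := by
  have support : ∀ p (hp : p < r), i ≤ p + 1 ↔ i' ≤ p + 1 := fun p hp => by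
    rw [← gammaD_ne_zero_iff hik hk ⟨p, hp⟩, ← gammaD_ne_zero_iff hik' hk' ⟨p, hp⟩, h]
  have := support (i - 1) (by omega)
  have := support (i' - 1) (by omega)
  obtain rfl : i = i' := by omega
  have e3 := congrFun h ⟨k - 1, by omega⟩
  have e4 := congrFun h ⟨k' - 1, by omega⟩
  simp only [gammaD] at e3 e4
  exact ⟨rfl, by split_ifs at e3 e4 <;> omega⟩

theorem betaD_ne_betaDr {i k i' : ℕ} (hk : k ≤ r - 1) (hr : 1 ≤ r) :
    betaD r i k ≠ betaDr r i' := by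
  intro h
  have e := congrFun h ⟨r - 1, by omega⟩
  simp only [betaD, betaDr] at e
  split_ifs at e <;> omega

theorem betaD_ne_gammaD {i k i' k' : ℕ} (hk : k ≤ r - 1) (hr : 1 ≤ r) :
    betaD r i k ≠ gammaD r i' k' := by
  intro h
  have e := congrFun h ⟨r - 1, by omega⟩
  simp only [betaD, gammaD] at e
  split_ifs at e <;> omega

theorem betaDr_ne_gammaD {i i' k' : ℕ} (hk' : k' ≤ r - 1) (hr : 2 ≤ r) :
    betaDr r i ≠ gammaD r i' k' := by
  intro h
  have e := congrFun h ⟨r - 2, by omega⟩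
  simp only [betaDr, gammaD] at e
  split_ifs at e <;> omega

end Roots

section PosRoots

variable {r : ℕ} {M : Type*} [AddCommMonoid M]

theorem betaD_mem_posRootsD (i : Fin (r - 1)) {b : ℕ} (hib : i.1 + 1 ≤ b) (hb : b ≤ r - 1) :
    betaD r (i.1 + 1) b ∈ posRootsD r := by
  simp only [posRootsD, Finset.mem_union, Finset.mem_image, Finset.mem_filter,
    Finset.mem_product, Finset.mem_Icc]
  exact Or.inl (Or.inl ⟨(i.1 + 1, b), ⟨⟨⟨by omega, by omega⟩, by omega, hb⟩, hib⟩, rfl⟩)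

theorem betaDr_mem_posRootsD (i : Fin (r - 1)) : betaDr r (i.1 + 1) ∈ posRootsD r := by
  simp only [posRootsD, Finset.mem_union, Finset.mem_image, Finset.mem_Icc]
  exact Or.inl (Or.inr ⟨i.1 + 1, ⟨by omega, by omega⟩, rfl⟩)

theorem gammaD_mem_posRootsD (i : Fin (r - 1)) {k : ℕ} (hik : i.1 + 2 ≤ k) (hk : k ≤ r - 1) :
    gammaD r (i.1 + 1) k ∈ posRootsD r := by
  simp only [posRootsD, Finset.mem_union, Finset.mem_image, Finset.mem_filter,
    Finset.mem_product, Finset.mem_Icc]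
  exact Or.inr ⟨(i.1 + 1, k), ⟨⟨⟨by omega, by omega⟩, by omega, hk⟩, by omega⟩, rfl⟩

theorem posRootsD_cases {v : Fin r → ℕ} (hv : v ∈ posRootsD r) :
    (∃ i : Fin (r - 1), ∃ b, i.1 + 1 ≤ b ∧ b ≤ r - 1 ∧ v = betaD r (i.1 + 1) b) ∨
    (∃ i : Fin (r - 1), v = betaDr r (i.1 + 1)) ∨
    (∃ i : Fin (r - 1), ∃ k, i.1 + 2 ≤ k ∧ k ≤ r - 1 ∧ v = gammaD r (i.1 + 1) k) := by
  simp only [posRootsD, Finset.mem_union, Finset.mem_image, Finset.mem_filter,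
    Finset.mem_product, Finset.mem_Icc, Prod.exists] at hv
  rcases hv with (⟨a, b, ⟨⟨⟨ha, -⟩, -, hb⟩, hab⟩, rfl⟩ | ⟨a, ⟨ha, ha'⟩, rfl⟩) |
    ⟨a, k, ⟨⟨⟨ha, -⟩, -, hk⟩, hak⟩, rfl⟩
  · exact Or.inl ⟨⟨a - 1, by omega⟩, b, by simp only; omega, hb, by simp only; congr; omega⟩
  · exact Or.inr (Or.inl ⟨⟨a - 1, by omega⟩, by simp only; congr; omega⟩)
  · refine Or.inr (Or.inr ⟨⟨a - 1, by omega⟩, k, ?_, hk, ?_⟩) <;> simp only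
    · omega
    · congr; omega

theorem sum_posRootsD_eq_add (f : (Fin r → ℕ) → M) :
    ∑ v ∈ posRootsD r, f v =
      (∑ p ∈ (Finset.Icc 1 (r - 1) ×ˢ Finset.Icc 1 (r - 1)).filter (fun p => p.1 ≤ p.2),
          f (betaD r p.1 p.2)) +
        (∑ a ∈ Finset.Icc 1 (r - 1), f (betaDr r a)) +
        ∑ p ∈ (Finset.Icc 1 (r - 1) ×ˢ Finset.Icc 1 (r - 1)).filter (fun p => p.1 < p.2),
          f (gammaD r p.1 p.2) := by
  have hA : Set.InjOn (fun p : ℕ × ℕ => betaD r p.1 p.2)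
      ((Finset.Icc 1 (r - 1) ×ˢ Finset.Icc 1 (r - 1)).filter fun p => p.1 ≤ p.2) := by
    rintro ⟨a, b⟩ hab ⟨a', b'⟩ hab' h
    simp only [Finset.coe_filter, Finset.mem_product, Finset.mem_Icc, Set.mem_ofPred_eq] at hab hab'
    obtain ⟨rfl, rfl⟩ := betaD_inj hab.1.1.1 hab.2 hab.1.2.2 hab'.1.1.1 hab'.2 hab'.1.2.2 h
    rfl
  have hB : Set.InjOn (betaDr r) (Finset.Icc 1 (r - 1)) := by
    intro a ha a' ha' h
    simp only [Finset.coe_Icc, Set.mem_Icc] at ha ha'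
    exact betaDr_inj ha.1 ha.2 ha'.1 ha'.2 h
  have hC : Set.InjOn (fun p : ℕ × ℕ => gammaD r p.1 p.2)
      ((Finset.Icc 1 (r - 1) ×ˢ Finset.Icc 1 (r - 1)).filter fun p => p.1 < p.2) := by
    rintro ⟨a, b⟩ hab ⟨a', b'⟩ hab' h
    simp only [Finset.coe_filter, Finset.mem_product, Finset.mem_Icc, Set.mem_ofPred_eq] at hab hab'
    obtain ⟨rfl, rfl⟩ := gammaD_inj hab.1.1.1 hab.2 hab.1.2.2 hab'.1.1.1 hab'.2 hab'.1.2.2 h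
    rfl
  rw [posRootsD, Finset.sum_union, Finset.sum_union, Finset.sum_image hA, Finset.sum_image hB,
    Finset.sum_image hC]
  all_goals simp only [Finset.disjoint_left, Finset.mem_union, Finset.mem_image,
    Finset.mem_filter, Finset.mem_product, Finset.mem_Icc]
  · rintro _ ⟨⟨a, b⟩, ⟨⟨_, _, hb⟩, _⟩, rfl⟩ ⟨c, _, h⟩
    exact betaD_ne_betaDr hb (by omega) h.symm
  · rintro _ (⟨⟨a, b⟩, ⟨⟨_, _, hb⟩, _⟩, rfl⟩ | ⟨c, _, rfl⟩) ⟨⟨a', b'⟩, ⟨⟨_, _, hb'⟩, _⟩, h⟩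
    · exact betaD_ne_gammaD hb (by omega) h.symm
    · exact betaDr_ne_gammaD hb' (by omega) h.symm

theorem sum_posRootsD (f : (Fin r → ℕ) → M) :
    ∑ v ∈ posRootsD r, f v = ∑ i : Fin (r - 1),
      ((∑ b ∈ Finset.Icc (i.1 + 1) (r - 1), f (betaD r (i.1 + 1) b)) + f (betaDr r (i.1 + 1)) +
        ∑ k ∈ Finset.Icc (i.1 + 2) (r - 1), f (gammaD r (i.1 + 1) k)) := by
  rw [sum_posRootsD_eq_add, Finset.sum_filter, Finset.sum_filter, Finset.sum_product,
    Finset.sum_product]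
  simp only [← Finset.sum_filter]
  rw [sum_Icc_one_eq_sum_fin, sum_Icc_one_eq_sum_fin, sum_Icc_one_eq_sum_fin,
    ← Finset.sum_add_distrib, ← Finset.sum_add_distrib]
  refine Finset.sum_congr rfl fun i _ => ?_
  rw [sum_Icc_filter_le (a := i.1 + 1) le_add_self _ (fun _ => Iff.rfl),
    sum_Icc_filter_le (a := i.1 + 2) (by omega) _ (fun _ => Nat.lt_iff_add_one_le)]

end PosRoots

section Xi

variable {r : ℕ}

/-- Pairs `(j, k)` with `j + 1 < k ≤ r - 1`, indexing the roots `β_{j+1,k-1}` and `γ_{j+1,k}`. -/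
def ltPairs (r : ℕ) : Finset ((_ : Fin (r - 1)) × ℕ) :=
  Finset.univ.sigma fun j => Finset.Icc (j.1 + 2) (r - 1)

theorem mem_ltPairs {p : (_ : Fin (r - 1)) × ℕ} :
    p ∈ ltPairs r ↔ p.1.1 + 2 ≤ p.2 ∧ p.2 ≤ r - 1 := by
  simp [ltPairs]

theorem XiD_eq_sum (T : TabD r) (v : Fin r → ℕ) : XiD r T v =
    (∑ p ∈ ltPairs r, if v = betaD r (p.1.1 + 1) (p.2 - 1) then ellD r T p.1 p.2 else 0) +
      (∑ j : Fin (r - 1), if v = betaD r (j.1 + 1) (r - 1) then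
        ellD r T j r + ellD r T j (2 * r - j.1) else 0) +
      (∑ j : Fin (r - 1), if v = betaDr r (j.1 + 1) then
        ellD r T j (r + 1) + ellD r T j (2 * r - j.1) else 0) +
      ∑ p ∈ ltPairs r,
        if v = gammaD r (p.1.1 + 1) p.2 then ellD r T p.1 (2 * r + 1 - p.2) else 0 := by
  simp only [XiD, ltPairs, Finset.sum_add_distrib, Finset.sum_sigma]

theorem injOn_betaD_ltPairs :
    Set.InjOn (fun p : (_ : Fin (r - 1)) × ℕ => betaD r (p.1.1 + 1) (p.2 - 1)) (ltPairs r) := by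
  rintro ⟨j, k⟩ hjk ⟨j', k'⟩ hjk' h
  rw [Finset.mem_coe, mem_ltPairs] at hjk hjk'
  dsimp only at hjk hjk' h
  obtain ⟨hj, hk⟩ := betaD_inj (by omega) (by omega) (by omega) (by omega) (by omega)
    (by omega) h
  obtain rfl : j = j' := Fin.ext (by omega)
  obtain rfl : k = k' := by omega
  rfl

theorem injOn_gammaD_ltPairs :
    Set.InjOn (fun p : (_ : Fin (r - 1)) × ℕ => gammaD r (p.1.1 + 1) p.2) (ltPairs r) := by
  rintro ⟨j, k⟩ hjk ⟨j', k'⟩ hjk' h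
  rw [Finset.mem_coe, mem_ltPairs] at hjk hjk'
  dsimp only at hjk hjk' h
  obtain ⟨hj, rfl⟩ := gammaD_inj (by omega) (by omega) (by omega) (by omega) (by omega)
    (by omega) h
  obtain rfl : j = j' := Fin.ext (by omega)
  rfl

theorem injective_betaD_top :
    Function.Injective fun j : Fin (r - 1) => betaD r (j.1 + 1) (r - 1) := fun j j' h =>
  Fin.ext (by have := betaD_inj (by omega) (by omega) le_rfl (by omega) (by omega) le_rfl h; omega)

theorem injective_betaDr : Function.Injective fun j : Fin (r - 1) => betaDr r (j.1 + 1) :=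
  fun j j' h => Fin.ext (by have := betaDr_inj (by omega) (by omega) (by omega) (by omega) h; omega)

theorem XiD_betaD (T : TabD r) (i : Fin (r - 1)) {b : ℕ} (hib : i.1 + 1 ≤ b) (hb : b ≤ r - 2) :
    XiD r T (betaD r (i.1 + 1) b) = ellD r T i (b + 1) := by
  have := i.isLt
  rw [XiD_eq_sum, Finset.sum_ite_eq_of_injOn injOn_betaD_ltPairs (fun p => ellD r T p.1 p.2)
    (p := ⟨i, b + 1⟩) (v := betaD r (i.1 + 1) b) (mem_ltPairs.2 (by dsimp only; omega)) (by simp),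
    Finset.sum_eq_zero fun j _ => if_neg fun h => ?_,
    Finset.sum_eq_zero fun j _ => if_neg (betaD_ne_betaDr (by omega) (by omega)),
    Finset.sum_eq_zero fun p _ => if_neg (betaD_ne_gammaD (by omega) (by omega))]
  · simp
  · have := betaD_inj (by omega) hib (by omega) (by omega) (by omega) le_rfl h
    omega

theorem XiD_betaD_top (T : TabD r) (i : Fin (r - 1)) :
    XiD r T (betaD r (i.1 + 1) (r - 1)) = ellD r T i r + ellD r T i (2 * r - i.1) := by
  have := i.isLt
  rw [XiD_eq_sum, Finset.sum_eq_zero fun p hp => if_neg fun h => ?_,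
    Finset.sum_ite_eq_of_injOn (s := Finset.univ) (injective_betaD_top.injOn)
      (fun j => ellD r T j r + ellD r T j (2 * r - j.1)) (Finset.mem_univ i) rfl,
    Finset.sum_eq_zero fun j _ => if_neg (betaD_ne_betaDr (by omega) (by omega)),
    Finset.sum_eq_zero fun p _ => if_neg (betaD_ne_gammaD (by omega) (by omega))]
  · simp
  · rw [mem_ltPairs] at hp
    have := betaD_inj (by omega) (by omega) le_rfl (by omega) (by omega) (by omega) h
    omega

theorem XiD_betaDr (T : TabD r) (i : Fin (r - 1)) :
    XiD r T (betaDr r (i.1 + 1)) = ellD r T i (r + 1) + ellD r T i (2 * r - i.1) := by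
  have := i.isLt
  rw [XiD_eq_sum,
    Finset.sum_eq_zero fun p hp => if_neg fun h =>
      betaD_ne_betaDr (by rw [mem_ltPairs] at hp; omega) (by omega) h.symm,
    Finset.sum_eq_zero fun j _ => if_neg fun h => betaD_ne_betaDr (by omega) (by omega) h.symm,
    Finset.sum_ite_eq_of_injOn (s := Finset.univ) (injective_betaDr.injOn)
      (fun j => ellD r T j (r + 1) + ellD r T j (2 * r - j.1)) (Finset.mem_univ i) rfl,
    Finset.sum_eq_zero fun p hp => if_neg (betaDr_ne_gammaD (by rw [mem_ltPairs] at hp; omega)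
      (by omega))]
  simp

theorem XiD_gammaD (T : TabD r) (i : Fin (r - 1)) {k : ℕ} (hik : i.1 + 2 ≤ k) (hk : k ≤ r - 1) :
    XiD r T (gammaD r (i.1 + 1) k) = ellD r T i (2 * r + 1 - k) := by
  have := i.isLt
  rw [XiD_eq_sum,
    Finset.sum_eq_zero fun p hp => if_neg fun h =>
      betaD_ne_gammaD (by rw [mem_ltPairs] at hp; omega) (by omega) h.symm,
    Finset.sum_eq_zero fun j _ => if_neg fun h => betaD_ne_gammaD (by omega) (by omega) h.symm,
    Finset.sum_eq_zero fun j _ => if_neg fun h => betaDr_ne_gammaD hk (by omega) h.symm,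
    Finset.sum_ite_eq_of_injOn injOn_gammaD_ltPairs (fun p => ellD r T p.1 (2 * r + 1 - p.2))
      (p := ⟨i, k⟩) (mem_ltPairs.2 ⟨hik, hk⟩) rfl]
  simp

end Xi

section Tableau

variable {r : ℕ}

theorem dleD_le {a b : ℕ} (h : dleD r a b) : a ≤ b :=
  h.elim le_of_eq fun h => h.1.le

theorem pairwise_le_of_isChain_dleD {l : List ℕ} (h : l.IsChain (dleD r)) :
    l.Pairwise (· ≤ ·) :=
  List.isChain_iff_pairwise.1 (h.imp fun _ _ => dleD_le)

theorem TabD.ext {T T' : TabD r} (h : T.row = T'.row) : T = T' := by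
  cases T
  cases T'
  simp only [TabD.mk.injEq]
  exact h

theorem TabD.le_of_mem_row (T : TabD r) {i : Fin (r - 1)} {x : ℕ} (hx : x ∈ T.row i) :
    i.1 + 1 ≤ x ∧ x ≤ 2 * r - i.1 := by
  refine ⟨?_, dleD_le (T.row_bound i x hx)⟩
  have hsorted := pairwise_le_of_isChain_dleD (T.row_weak i)
  have hhead := T.first_col i
  cases hrow : T.row i with
  | nil => simp [hrow] at hx
  | cons a l =>
    rw [hrow, List.head?_cons, Option.some.injEq] at hhead
    rw [hrow] at hx hsorted
    rcases List.mem_cons.1 hx with rfl | hx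
    · exact hhead.ge
    · exact hhead ▸ List.rel_of_pairwise_cons hsorted hx

theorem ellD_eq_zero_of_lt (T : TabD r) (i : Fin (r - 1)) {x : ℕ} (hx : x < i.1 + 1) :
    ellD r T i x = 0 :=
  List.count_eq_zero.2 fun hmem => by have := T.le_of_mem_row hmem; omega

theorem ellD_eq_zero_of_gt (T : TabD r) (i : Fin (r - 1)) {x : ℕ} (hx : 2 * r - i.1 < x) :
    ellD r T i x = 0 :=
  List.count_eq_zero.2 fun hmem => by have := T.le_of_mem_row hmem; omega

theorem ellD_r_eq_zero_or (T : TabD r) (i : Fin (r - 1)) :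
    ellD r T i r = 0 ∨ ellD r T i (r + 1) = 0 := by
  simp only [ellD, List.count_eq_zero]
  exact not_and_or.1 (T.not_both i)

theorem ellD_recovery (T : TabD r) (i : Fin (r - 1)) :
    (∀ k : ℕ, i.1 + 1 ≤ k → k ≤ r - 2 →
      ellD r T i (k + 1) = XiD r T (betaD r (i.1 + 1) k)) ∧
    ellD r T i r
      = XiD r T (betaD r (i.1 + 1) (r - 1)) - XiD r T (betaDr r (i.1 + 1)) ∧
    ellD r T i (r + 1)
      = XiD r T (betaDr r (i.1 + 1)) - XiD r T (betaD r (i.1 + 1) (r - 1)) ∧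
    ellD r T i (2 * r - i.1)
      = min (XiD r T (betaD r (i.1 + 1) (r - 1))) (XiD r T (betaDr r (i.1 + 1))) ∧
    (∀ k : ℕ, i.1 + 2 ≤ k → k ≤ r - 1 →
      ellD r T i (2 * r + 1 - k) = XiD r T (gammaD r (i.1 + 1) k)) := by
  have := ellD_r_eq_zero_or T i
  rw [XiD_betaD_top T i, XiD_betaDr T i]
  exact ⟨fun k h1 h2 => (XiD_betaD T i h1 h2).symm, by omega, by omega, by omega,
    fun k h1 h2 => (XiD_gammaD T i h1 h2).symm⟩

end Tableau

section Construction

variable {r : ℕ} (g : (Fin r → ℕ) → ℕ)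

/-- The inverse formulas: the number of `x`-entries, `x ≻ i + 1`, in row `i` (0-based) of the
tableau whose `Ξ` is `g`. -/
def ellOf (r : ℕ) (g : (Fin r → ℕ) → ℕ) (i x : ℕ) : ℕ :=
  if i + 2 ≤ x ∧ x ≤ r - 1 then g (betaD r (i + 1) (x - 1))
  else if x = r then g (betaD r (i + 1) (r - 1)) - g (betaDr r (i + 1))
  else if x = r + 1 then g (betaDr r (i + 1)) - g (betaD r (i + 1) (r - 1))
  else if r + 2 ≤ x ∧ x ≤ 2 * r - i - 1 then g (gammaD r (i + 1) (2 * r + 1 - x))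
  else if x = 2 * r - i then min (g (betaD r (i + 1) (r - 1))) (g (betaDr r (i + 1)))
  else 0

/-- Each row `j` has one more `(j+1)`-entry than row `j + 1` has boxes, so the row lengths
telescope into this sum. -/
def rowLenOf (r : ℕ) (g : (Fin r → ℕ) → ℕ) (i : ℕ) : ℕ :=
  ∑ j ∈ Finset.Icc i (r - 2), (1 + ∑ x ∈ Finset.Icc (j + 2) (2 * r - j), ellOf r g j x)

def countOf (r : ℕ) (g : (Fin r → ℕ) → ℕ) (i x : ℕ) : ℕ :=
  if x = i + 1 then rowLenOf r g (i + 1) + 1 else ellOf r g i x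

def rowOf (r : ℕ) (g : (Fin r → ℕ) → ℕ) (i : ℕ) : List ℕ :=
  replicateRuns (countOf r g i) (i + 1) (2 * r - 2 * i)

theorem ellOf_of_le {i x : ℕ} (h1 : i + 2 ≤ x) (h2 : x ≤ r - 1) :
    ellOf r g i x = g (betaD r (i + 1) (x - 1)) := by
  rw [ellOf, if_pos ⟨h1, h2⟩]

theorem ellOf_r (i : ℕ) :
    ellOf r g i r = g (betaD r (i + 1) (r - 1)) - g (betaDr r (i + 1)) := by
  rw [ellOf, if_neg (by omega), if_pos rfl]

theorem ellOf_r_add_one (i : ℕ) :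
    ellOf r g i (r + 1) = g (betaDr r (i + 1)) - g (betaD r (i + 1) (r - 1)) := by
  rw [ellOf, if_neg (by omega), if_neg (by omega), if_pos rfl]

theorem ellOf_of_ge {i x : ℕ} (h1 : r + 2 ≤ x) (h2 : x ≤ 2 * r - i - 1) :
    ellOf r g i x = g (gammaD r (i + 1) (2 * r + 1 - x)) := by
  rw [ellOf, if_neg (by omega), if_neg (by omega), if_neg (by omega), if_pos ⟨h1, h2⟩]

theorem ellOf_bar {i : ℕ} (hi : i + 2 ≤ r) :
    ellOf r g i (2 * r - i) = min (g (betaD r (i + 1) (r - 1))) (g (betaDr r (i + 1))) := by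
  rw [ellOf, if_neg (by omega), if_neg (by omega), if_neg (by omega), if_neg (by omega),
    if_pos rfl]

theorem rowLenOf_of_lt {i : ℕ} (hi : r - 2 < i) : rowLenOf r g i = 0 := by
  rw [rowLenOf, Finset.Icc_eq_empty (by omega), Finset.sum_empty]

theorem rowLenOf_eq {i : ℕ} (hi : i + 2 ≤ r) :
    rowLenOf r g i = rowLenOf r g (i + 1) + 1 +
      ∑ x ∈ Finset.Icc (i + 2) (2 * r - i), ellOf r g i x := by
  rw [rowLenOf, rowLenOf, ← Finset.insert_Icc_add_one_left_eq_Icc (show i ≤ r - 2 by omega),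
    Finset.sum_insert (by simp)]
  omega

theorem count_rowOf (i x : ℕ) :
    (rowOf r g i).count x = if i + 1 ≤ x ∧ x ≤ 2 * r - i then countOf r g i x else 0 := by
  rw [rowOf, count_replicateRuns]
  exact if_congr (by omega) rfl rfl

theorem mem_rowOf {i x : ℕ} :
    x ∈ rowOf r g i ↔ i + 1 ≤ x ∧ x ≤ 2 * r - i ∧ 0 < countOf r g i x := by
  rw [rowOf, mem_replicateRuns]
  omega

theorem length_rowOf {i : ℕ} (hi : i + 2 ≤ r) : (rowOf r g i).length = rowLenOf r g i := by
  rw [rowOf, length_replicateRuns, show i + 1 + (2 * r - 2 * i) = 2 * r - i + 1 by omega,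
    Finset.sum_eq_sum_Ico_succ_bot (by omega), Finset.Ico_add_one_right_eq_Icc, rowLenOf_eq g hi,
    countOf, if_pos rfl]
  congr 1
  exact Finset.sum_congr rfl fun x hx => by
    rw [Finset.mem_Icc] at hx
    rw [countOf, if_neg (by omega)]

theorem not_r_mem_and_mem_rowOf {i : ℕ} (hi : i + 2 ≤ r) :
    ¬(r ∈ rowOf r g i ∧ (r + 1) ∈ rowOf r g i) := by
  rintro ⟨h1, h2⟩
  have c1 := ((mem_rowOf g).1 h1).2.2
  have c2 := ((mem_rowOf g).1 h2).2.2
  rw [countOf, if_neg (by omega), ellOf_r g i] at c1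
  rw [countOf, if_neg (by omega), ellOf_r_add_one g i] at c2
  omega

def tabOf (r : ℕ) (g : (Fin r → ℕ) → ℕ) : TabD r where
  row i := rowOf r g i.1
  entry_mem i e he := by
    have := (mem_rowOf g).1 he
    omega
  row_weak i := by
    refine List.Pairwise.isChain ((pairwise_le_replicateRuns _ _ _).imp_of_mem ?_)
    intro a b ha hb hab
    rcases hab.eq_or_lt with rfl | hlt
    · exact Or.inl rfl
    · exact Or.inr ⟨hlt, fun ⟨h1, h2⟩ =>
        not_r_mem_and_mem_rowOf g (by omega) ⟨h1 ▸ ha, h2 ▸ hb⟩⟩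
  first_col i := head?_replicateRuns _ (by omega) (by rw [countOf, if_pos rfl]; omega)
  row_bound i e he := by
    have := (mem_rowOf g).1 he
    rcases this.2.1.eq_or_lt with h | h
    · exact Or.inl h
    · exact Or.inr ⟨h, by omega⟩
  not_both i := not_r_mem_and_mem_rowOf g (by omega)
  col_le i h := by
    simp only [length_rowOf g (show i.1 + 1 + 2 ≤ r by omega),
      length_rowOf g (show i.1 + 2 ≤ r by omega), rowLenOf_eq g (show i.1 + 2 ≤ r by omega)]
    omega
  col_strict i h j hj := by
    show dltD r ((rowOf r g i.1).getD j 0) ((rowOf r g (i.1 + 1)).getD j 0)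
    simp only [length_rowOf g (show i.1 + 1 + 2 ≤ r by omega)] at hj
    have hleft : (rowOf r g i.1).getD j 0 = i.1 + 1 :=
      getD_replicateRuns_of_lt _ (by omega) (by rw [countOf, if_pos rfl]; omega)
    have hright : (rowOf r g (i.1 + 1)).getD j 0 ∈ rowOf r g (i.1 + 1) := by
      rw [List.getD_eq_getElem _ _ (by rw [length_rowOf g (by omega)]; omega)]
      exact List.getElem_mem _
    have := ((mem_rowOf g).1 hright).1
    rw [hleft]
    exact ⟨by omega, by omega⟩
  marg_large i := by
    rw [count_rowOf, if_pos (by omega), countOf, if_pos rfl]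
    split_ifs with h
    · rw [length_rowOf g (by omega)]
    · rw [rowLenOf_of_lt g (by omega)]

theorem ellD_tabOf (i : Fin (r - 1)) {x : ℕ} (h1 : i.1 + 2 ≤ x) (h2 : x ≤ 2 * r - i.1) :
    ellD r (tabOf r g) i x = ellOf r g i.1 x := by
  show (rowOf r g i.1).count x = _
  rw [count_rowOf, if_pos (by omega), countOf, if_neg (by omega)]

end Construction

section Inverse

variable {r : ℕ}

theorem XiD_tabOf (g : (Fin r → ℕ) → ℕ) {v : Fin r → ℕ} (hv : v ∈ posRootsD r) :
    XiD r (tabOf r g) v = g v := by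
  rcases posRootsD_cases hv with ⟨i, b, hib, hb, rfl⟩ | ⟨i, rfl⟩ | ⟨i, k, hik, hk, rfl⟩
  · rcases Nat.lt_or_ge b (r - 1) with hb' | hb'
    · rw [XiD_betaD _ i hib (by omega), ellD_tabOf g i (by omega) (by omega),
        ellOf_of_le g (by omega) (by omega), Nat.add_sub_cancel]
    · obtain rfl : b = r - 1 := by omega
      rw [XiD_betaD_top, ellD_tabOf g i (by omega) (by omega),
        ellD_tabOf g i (by omega) le_rfl, ellOf_r, ellOf_bar g (by omega)]
      omega
  · rw [XiD_betaDr, ellD_tabOf g i (by omega) (by omega),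
      ellD_tabOf g i (by omega) le_rfl, ellOf_r_add_one, ellOf_bar g (by omega)]
    omega
  · rw [XiD_gammaD _ i hik hk, ellD_tabOf g i (by omega) (by omega),
      ellOf_of_ge g (by omega) (by omega), show 2 * r + 1 - (2 * r + 1 - k) = k by omega]

variable {g : (Fin r → ℕ) → ℕ} {T : TabD r}

theorem ellD_eq_ellOf (hg : ∀ v ∈ posRootsD r, g v = XiD r T v) (i : Fin (r - 1)) {x : ℕ}
    (h1 : i.1 + 2 ≤ x) (h2 : x ≤ 2 * r - i.1) :
    ellD r T i x = ellOf r g i.1 x := by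
  obtain ⟨hβ, hr', hr'', hbar, hγ⟩ := ellD_recovery T i
  have hβtop := hg _ (betaD_mem_posRootsD i (b := r - 1) (by omega) le_rfl)
  have hβr := hg _ (betaDr_mem_posRootsD i)
  by_cases hx : x ≤ r - 1
  · rw [ellOf_of_le g h1 hx, hg _ (betaD_mem_posRootsD i (by omega) (by omega)),
      ← hβ _ (by omega) (by omega), Nat.sub_add_cancel (by omega)]
  obtain rfl | rfl | hx' | rfl : x = r ∨ x = r + 1 ∨ (r + 2 ≤ x ∧ x ≤ 2 * r - i.1 - 1) ∨
    x = 2 * r - i.1 := by omega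
  · rw [ellOf_r, hβtop, hβr, hr']
  · rw [ellOf_r_add_one, hβtop, hβr, hr'']
  · rw [ellOf_of_ge g hx'.1 hx'.2, hg _ (gammaD_mem_posRootsD i (by omega) (by omega)),
      ← hγ _ (by omega) (by omega), show 2 * r + 1 - (2 * r + 1 - x) = x by omega]
  · rw [ellOf_bar g (by omega), hβtop, hβr, hbar]

theorem row_eq_rowOf (hg : ∀ v ∈ posRootsD r, g v = XiD r T v) (i : Fin (r - 1)) :
    T.row i = rowOf r g i.1 := by
  refine List.Perm.eq_of_pairwise' (pairwise_le_of_isChain_dleD (T.row_weak i))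
    (pairwise_le_replicateRuns _ _ _) (List.perm_iff_count.2 fun x => ?_)
  rw [count_rowOf]
  split_ifs with hx
  · by_cases hxi : x = i.1 + 1
    · subst hxi
      rw [T.marg_large i, countOf, if_pos rfl]
      split_ifs with h
      · rw [row_eq_rowOf hg ⟨i.1 + 1, h⟩, length_rowOf g (by simp only; omega)]
      · rw [rowLenOf_of_lt g (by omega)]
    · rw [countOf, if_neg hxi]
      exact ellD_eq_ellOf hg i (by omega) hx.2
  · rcases not_and_or.1 hx with hx | hx
    · exact ellD_eq_zero_of_lt T i (by omega)
    · exact ellD_eq_zero_of_gt T i (by omega)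
termination_by r - 1 - i.1

theorem tabOf_eq (hg : ∀ v ∈ posRootsD r, g v = XiD r T v) : tabOf r g = T :=
  TabD.ext (funext fun i => (row_eq_rowOf hg i).symm)

theorem XiD_bijective :
    Function.Bijective fun (T : TabD r) (α : {v // v ∈ posRootsD r}) => XiD r T α.1 := by
  let extend (f : {v // v ∈ posRootsD r} → ℕ) (v : Fin r → ℕ) : ℕ :=
    if h : v ∈ posRootsD r then f ⟨v, h⟩ else 0
  refine Function.bijective_iff_has_inverse.2
    ⟨fun f => tabOf r (extend f), fun T => ?_, fun f => ?_⟩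
  · exact tabOf_eq fun v hv => dif_pos hv
  · funext ⟨v, hv⟩
    exact (XiD_tabOf _ hv).trans (dif_pos hv)

end Inverse

section Segments

variable {r : ℕ}

theorem sum_Icc_letters {M : Type*} [AddCommMonoid M] (f : ℕ → M) {i : ℕ} (hi : i + 2 ≤ r)
    (hf : ∀ x, 2 * r - i < x → f x = 0) :
    ∑ x ∈ Finset.Icc (i + 2) (2 * r), f x =
      ∑ x ∈ Finset.Icc (i + 2) (r - 1), f x + f r + f (r + 1) +
        ∑ x ∈ Finset.Icc (r + 2) (2 * r - i - 1), f x + f (2 * r - i) := by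
  have hsplit (a b c : ℕ) (hab : a ≤ b + 1) (hbc : b ≤ c) := sum_Icc_consecutive f hab hbc
  rw [hsplit (i + 2) (r - 1) (2 * r) (by omega) (by omega), Nat.sub_add_cancel (by omega),
    hsplit r r (2 * r) (by omega) (by omega), hsplit (r + 1) (r + 1) (2 * r) (by omega)
      (by omega), hsplit (r + 2) (2 * r - i - 1) (2 * r) (by omega) (by omega),
    Nat.sub_add_cancel (by omega), hsplit (2 * r - i) (2 * r - i) (2 * r) (by omega) (by omega),
    Finset.sum_eq_zero (s := Finset.Icc (2 * r - i + 1) (2 * r)) fun x hx =>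
      hf x (by rw [Finset.mem_Icc] at hx; omega)]
  simp only [Finset.Icc_self, Finset.sum_singleton, add_zero, add_assoc]

theorem card_segments_row_eq (T : TabD r) (i : Fin (r - 1)) :
    ((Finset.Icc (i.1 + 2) (2 * r)).filter fun x => ellD r T i x ≠ 0).card +
        (if ellD r T i (2 * r - i.1) ≠ 0 ∧ ellD r T i r = 0 ∧ ellD r T i (r + 1) = 0
          then 1 else 0) =
      (∑ b ∈ Finset.Icc (i.1 + 1) (r - 1),
          if XiD r T (betaD r (i.1 + 1) b) ≠ 0 then 1 else 0) +
        (if XiD r T (betaDr r (i.1 + 1)) ≠ 0 then 1 else 0) +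
        ∑ k ∈ Finset.Icc (i.1 + 2) (r - 1),
          if XiD r T (gammaD r (i.1 + 1) k) ≠ 0 then 1 else 0 := by
  have := i.isLt
  have hβ : ∑ b ∈ Finset.Icc (i.1 + 1) (r - 2),
      (if XiD r T (betaD r (i.1 + 1) b) ≠ 0 then 1 else 0) =
        ∑ x ∈ Finset.Icc (i.1 + 2) (r - 1), if ellD r T i x ≠ 0 then 1 else 0 := by
    refine Finset.sum_nbij' (· + 1) (· - 1) ?_ ?_ ?_ ?_ fun b hb => ?_ <;>
      simp only [Finset.mem_Icc] at * <;> try omega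
    rw [XiD_betaD T i hb.1 hb.2]
  have hγ : ∑ k ∈ Finset.Icc (i.1 + 2) (r - 1),
      (if XiD r T (gammaD r (i.1 + 1) k) ≠ 0 then 1 else 0) =
        ∑ x ∈ Finset.Icc (r + 2) (2 * r - i.1 - 1), if ellD r T i x ≠ 0 then 1 else 0 := by
    refine Finset.sum_nbij' (2 * r + 1 - ·) (2 * r + 1 - ·) ?_ ?_ ?_ ?_ fun k hk => ?_ <;>
      simp only [Finset.mem_Icc] at * <;> try omega
    rw [XiD_gammaD T i hk.1 hk.2]
  rw [Finset.card_filter, sum_Icc_letters _ (by omega) fun x hx => by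
      rw [ellD_eq_zero_of_gt T i hx, if_neg (not_not.2 rfl)],
    sum_Icc_consecutive _ (a := i.1 + 1) (b := r - 2) (by omega) (by omega),
    show r - 2 + 1 = r - 1 by omega,
    Finset.Icc_self, Finset.sum_singleton, hβ, hγ, XiD_betaD_top, XiD_betaDr]
  have := ellD_r_eq_zero_or T i
  split_ifs <;> omega

theorem segD_eq_card (T : TabD r) :
    segD r T = ((posRootsD r).filter fun v => XiD r T v ≠ 0).card := by
  rw [segD, segD', eD, Finset.card_filter, Finset.card_filter, sum_posRootsD,
    ← Finset.sum_add_distrib]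
  exact Finset.sum_congr rfl fun i _ => card_segments_row_eq T i

end Segments

theorem stmt7_general (r : ℕ) :
    Function.Bijective
      (fun (T : TabD r) (α : {v // v ∈ posRootsD r}) => XiD r T α.1) ∧
    (∀ T : TabD r, ∀ i : Fin (r - 1),
      (∀ k : ℕ, i.1 + 1 ≤ k → k ≤ r - 2 →
        ellD r T i (k + 1) = XiD r T (betaD r (i.1 + 1) k)) ∧
      ellD r T i r
        = XiD r T (betaD r (i.1 + 1) (r - 1)) - XiD r T (betaDr r (i.1 + 1)) ∧
      ellD r T i (r + 1)
        = XiD r T (betaDr r (i.1 + 1)) - XiD r T (betaD r (i.1 + 1) (r - 1)) ∧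
      ellD r T i (2 * r - i.1)
        = min (XiD r T (betaD r (i.1 + 1) (r - 1))) (XiD r T (betaDr r (i.1 + 1))) ∧
      (∀ k : ℕ, i.1 + 2 ≤ k → k ≤ r - 1 →
        ellD r T i (2 * r + 1 - k) = XiD r T (gammaD r (i.1 + 1) k))) ∧
    (∀ T : TabD r,
      segD r T = ((posRootsD r).filter fun v => XiD r T v ≠ 0).card) :=
  ⟨XiD_bijective, ellD_recovery, segD_eq_card⟩

/-- `Ξ` is a bijection from `𝒯(∞)` of type `D_r` onto the set of
all functions from the positive roots of `D_r` to `ℕ`; its inverse recovers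
the segment data via `ℓ_{i,k+1} = c_{i,k}` (`k ≤ r-2`),
`ℓ_{i,r} = max(0, c_{i,r-1} - c_{i,r})`, `ℓ_{i,r̄} = max(0, c_{i,r} - c_{i,r-1})`,
`ℓ_{i,ī} = min(c_{i,r-1}, c_{i,r})`, `ℓ_{i,k̄} = d_{i,k}` (expressed here,
equivalently, as formulas for the segment data of `T` in terms of `c = Ξ(T)`,
with `max(0, a-b)` the truncated subtraction on `ℕ`); moreover
`seg(T) = seg′(T) + e_D(T)` equals the number of positive roots where `Ξ(T)`
is nonzero. -/
theorem stmt7 (r : ℕ) (hr : 4 ≤ r) :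
    Function.Bijective
      (fun (T : TabD r) (α : {v // v ∈ posRootsD r}) => XiD r T α.1) ∧
    (∀ T : TabD r, ∀ i : Fin (r - 1),
      (∀ k : ℕ, i.1 + 1 ≤ k → k ≤ r - 2 →
        ellD r T i (k + 1) = XiD r T (betaD r (i.1 + 1) k)) ∧
      ellD r T i r
        = XiD r T (betaD r (i.1 + 1) (r - 1)) - XiD r T (betaDr r (i.1 + 1)) ∧
      ellD r T i (r + 1)
        = XiD r T (betaDr r (i.1 + 1)) - XiD r T (betaD r (i.1 + 1) (r - 1)) ∧
      ellD r T i (2 * r - i.1)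
        = min (XiD r T (betaD r (i.1 + 1) (r - 1))) (XiD r T (betaDr r (i.1 + 1))) ∧
      (∀ k : ℕ, i.1 + 2 ≤ k → k ≤ r - 1 →
        ellD r T i (2 * r + 1 - k) = XiD r T (gammaD r (i.1 + 1) k))) ∧
    (∀ T : TabD r,
      segD r T = ((posRootsD r).filter fun v => XiD r T v ≠ 0).card) :=
  stmt7_general r
end

section
/- The map Ξ is a bijection from 𝒯(∞) onto the set of all functions from the six positive roots {α_1, α_1+α_2, 2α_1+α_2, 3α_1+α_2, 3α_1+2α_2, α_2} of G_2 to the nonnegative integers. Moreover, for every T ∈ 𝒯(∞), seg(T) equals the number of positive roots α with Ξ(T)(α) ≠ 0. -/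
/-- The marginally large tableaux `𝒯(∞)` of type `G_2`, each determined by its
segment data `(ℓ_{1,2}, ℓ_{1,3}, ℓ_{1,0}, ℓ_{1,3̄}, ℓ_{1,2̄}, ℓ_{1,1̄}, ℓ_{2,3})`
with `ℓ_{1,0} ∈ {0,1}`. -/
structure TabG where
  l12 : ℕ
  l13 : ℕ
  l10 : ℕ
  l13b : ℕ
  l12b : ℕ
  l11b : ℕ
  l23 : ℕ
  l10_le : l10 ≤ 1

/-- The set of positive roots of `G_2`
(`α_1, α_1+α_2, 2α_1+α_2, 3α_1+α_2, 3α_1+2α_2, α_2`), in simple-root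
coordinates. -/
def posRootsG : Finset (Fin 2 → ℕ) :=
  {![1, 0], ![1, 1], ![2, 1], ![3, 1], ![3, 2], ![0, 1]}

/-- `Ξ(T)`, extended by zero to all vectors: `ℓ_{1,2}` at `α_1`, `ℓ_{1,3}` at
`α_1+α_2`, `2ℓ_{1,1̄} + ℓ_{1,0}` at `2α_1+α_2`, `ℓ_{1,3̄}` at `3α_1+α_2`,
`ℓ_{1,2̄}` at `3α_1+2α_2`, and `ℓ_{2,3}` at `α_2`. -/
def XiG (T : TabG) (v : Fin 2 → ℕ) : ℕ :=
  (if v = ![1, 0] then T.l12 else 0) +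
    (if v = ![1, 1] then T.l13 else 0) +
    (if v = ![2, 1] then 2 * T.l11b + T.l10 else 0) +
    (if v = ![3, 1] then T.l13b else 0) +
    (if v = ![3, 2] then T.l12b else 0) +
    (if v = ![0, 1] then T.l23 else 0)

/-- `seg′(T)`: the number of nonzero values among the seven segment data. -/
def segG' (T : TabG) : ℕ :=
  (if T.l12 ≠ 0 then 1 else 0) + (if T.l13 ≠ 0 then 1 else 0) +
    (if T.l10 ≠ 0 then 1 else 0) + (if T.l13b ≠ 0 then 1 else 0) +
    (if T.l12b ≠ 0 then 1 else 0) + (if T.l11b ≠ 0 then 1 else 0) +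
    (if T.l23 ≠ 0 then 1 else 0)

/-- `seg(T) = seg′(T) - 1` if the first row contains both a `0`-segment and a
`1̄`-segment, and `seg(T) = seg′(T)` otherwise. -/
def segG (T : TabG) : ℕ :=
  segG' T - (if T.l10 ≠ 0 ∧ T.l11b ≠ 0 then 1 else 0)

/-- `-wt(T) = Σ_α Ξ(T)(α)·α`, in simple-root coordinates. -/
def negwtG (T : TabG) : Fin 2 → ℕ :=
  ∑ v ∈ posRootsG, XiG T v • v

/-! The value of `Ξ` at `2α_1+α_2` is `2ℓ_{1,1̄} + ℓ_{1,0}` with `ℓ_{1,0} ∈ {0,1}`, so division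
with remainder by `2` recovers both entries and `Ξ` is inverted coordinatewise. The segments `0`
and `1̄` both feed that single root, whose value is nonzero exactly when one of them is; the
correction `seg = seg′ - 1` is inclusion–exclusion for this pair. -/

lemma mem_posRootsG {v : Fin 2 → ℕ} :
    v ∈ posRootsG ↔ v = ![1, 0] ∨ v = ![1, 1] ∨ v = ![2, 1] ∨ v = ![3, 1] ∨ v = ![3, 2] ∨
      v = ![0, 1] := by
  simp [posRootsG]

lemma card_filter_posRootsG (p : (Fin 2 → ℕ) → Prop) [DecidablePred p] :
    (posRootsG.filter p).card =
      (if p ![1, 0] then 1 else 0) + (if p ![1, 1] then 1 else 0) + (if p ![2, 1] then 1 else 0) +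
        (if p ![3, 1] then 1 else 0) + (if p ![3, 2] then 1 else 0) +
        (if p ![0, 1] then 1 else 0) := by
  rw [Finset.card_filter, posRootsG, Finset.sum_insert (by decide), Finset.sum_insert (by decide),
    Finset.sum_insert (by decide), Finset.sum_insert (by decide), Finset.sum_insert (by decide),
    Finset.sum_singleton]
  ring

section

variable (T : TabG)

@[simp] lemma XiG_α₁ : XiG T ![1, 0] = T.l12 := by simp [XiG, funext_iff, Fin.forall_fin_two]

@[simp] lemma XiG_α₁_add_α₂ : XiG T ![1, 1] = T.l13 := by
  simp [XiG, funext_iff, Fin.forall_fin_two]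

@[simp] lemma XiG_two_α₁_add_α₂ : XiG T ![2, 1] = 2 * T.l11b + T.l10 := by
  simp [XiG, funext_iff, Fin.forall_fin_two]

@[simp] lemma XiG_three_α₁_add_α₂ : XiG T ![3, 1] = T.l13b := by
  simp [XiG, funext_iff, Fin.forall_fin_two]

@[simp] lemma XiG_three_α₁_add_two_α₂ : XiG T ![3, 2] = T.l12b := by
  simp [XiG, funext_iff, Fin.forall_fin_two]

@[simp] lemma XiG_α₂ : XiG T ![0, 1] = T.l23 := by simp [XiG, funext_iff, Fin.forall_fin_two]

lemma segG_eq :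
    segG T =
      (if T.l12 ≠ 0 then 1 else 0) + (if T.l13 ≠ 0 then 1 else 0) +
        (if 2 * T.l11b + T.l10 ≠ 0 then 1 else 0) + (if T.l13b ≠ 0 then 1 else 0) +
        (if T.l12b ≠ 0 then 1 else 0) + (if T.l23 ≠ 0 then 1 else 0) := by
  unfold segG segG'
  split_ifs <;> omega

end

def TabG.ofRootFun (f : {v // v ∈ posRootsG} → ℕ) : TabG where
  l12 := f ⟨![1, 0], by simp [posRootsG]⟩
  l13 := f ⟨![1, 1], by simp [posRootsG]⟩
  l10 := f ⟨![2, 1], by simp [posRootsG]⟩ % 2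
  l13b := f ⟨![3, 1], by simp [posRootsG]⟩
  l12b := f ⟨![3, 2], by simp [posRootsG]⟩
  l11b := f ⟨![2, 1], by simp [posRootsG]⟩ / 2
  l23 := f ⟨![0, 1], by simp [posRootsG]⟩
  l10_le := Nat.le_of_lt_succ (Nat.mod_lt _ two_pos)

def TabG.xiEquiv : TabG ≃ ({v // v ∈ posRootsG} → ℕ) where
  toFun T α := XiG T α
  invFun := ofRootFun
  left_inv T := by
    have := T.l10_le
    simp only [ofRootFun, XiG_α₁, XiG_α₁_add_α₂, XiG_two_α₁_add_α₂, XiG_three_α₁_add_α₂,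
      XiG_three_α₁_add_two_α₂, XiG_α₂]
    congr <;> omega
  right_inv f := by
    funext ⟨v, hv⟩
    rcases mem_posRootsG.1 hv with rfl | rfl | rfl | rfl | rfl | rfl <;>
      simp [ofRootFun, Nat.div_add_mod]

/-- `Ξ` is a bijection from `𝒯(∞)` of type `G_2` onto the set of
all functions from the six positive roots of `G_2` to `ℕ`; moreover `seg(T)`
equals the number of positive roots where `Ξ(T)` is nonzero. -/
theorem stmt9 :
    Function.Bijective
      (fun (T : TabG) (α : {v // v ∈ posRootsG}) => XiG T α.1) ∧
    (∀ T : TabG,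
      segG T = (posRootsG.filter fun v => XiG T v ≠ 0).card) := by
  refine ⟨TabG.xiEquiv.bijective, fun T => ?_⟩
  rw [card_filter_posRootsG, segG_eq]
  simp only [XiG_α₁, XiG_α₁_add_α₂, XiG_two_α₁_add_α₂, XiG_three_α₁_add_α₂,
    XiG_three_α₁_add_two_α₂, XiG_α₂]
end
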